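/- arXiv:2502.13586 — 8 statements merged into one kernel-verified Lean document; each statement's English description precedes it below -/
import Mathlib

section
/- Let N ≥ 2 be an integer, 0 < ε < π/2 and a > 0. Then there exist constants d₁, d₂ > 0, depending only on ε and a, such that for every λ ∈ Σ_ε and every ξ' ∈ ℝ^{N−1}, the complex number E := (a^{−1}λ + |ξ'|²)^{1/2} (principal square root; the argument lies in ℂ \ (−∞, 0] since λ ∈ Σ_ε) satisfies d₁(|λ|^{1/2} + |ξ'|) ≤ Re E ≤ |E| ≤ d₂(|λ|^{1/2} + |ξ'|). -/
private lemma aux_sq_le (x y : ℝ) (hx : 0 ≤ x) (hy : 0 ≤ y) (h : x ^ 2 ≤ y ^ 2) : x ≤ y := by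
  nlinarith

private lemma aux_low (c A S x y : ℝ) (hc0 : 0 < c) (hc1 : c < 1) (hS : 0 ≤ S)
    (hA : A ^ 2 = x ^ 2 + y ^ 2) (hx : -c * A ≤ x) :
    (1 - c) / 2 * (A + S) ^ 2 ≤ (x + S) ^ 2 + y ^ 2 := by
  nlinarith [mul_nonneg hS (by linarith : 0 ≤ x + c * A),
    mul_nonneg (by linarith : (0:ℝ) ≤ 1 + c) (sq_nonneg (A - S))]

private lemma aux_re (c A S x y Z : ℝ) (hc0 : 0 < c) (hc1 : c < 1) (hS : 0 ≤ S)
    (hA0 : 0 ≤ A) (hA : A ^ 2 = x ^ 2 + y ^ 2) (hx : -c * A ≤ x)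
    (hZ0 : 0 ≤ Z) (hZ : Z ^ 2 = (x + S) ^ 2 + y ^ 2) :
    -c * Z ≤ x + S := by
  rcases le_or_gt 0 (x + S) with h | h
  · have : 0 ≤ c * Z := mul_nonneg hc0.le hZ0
    linarith
  · have hxneg : x < 0 := by linarith
    have hcA : 0 ≤ c * A := mul_nonneg hc0.le hA0
    have sq1 : x ^ 2 ≤ c ^ 2 * A ^ 2 := by
      nlinarith [mul_nonneg (by linarith : 0 ≤ c * A + x) (by linarith : 0 ≤ c * A - x)]
    have sq2 : (x + S) ^ 2 ≤ x ^ 2 := by nlinarith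
    have hcc : 0 ≤ 1 - c ^ 2 := by nlinarith
    have hA2 : c ^ 2 * A ^ 2 = c ^ 2 * x ^ 2 + c ^ 2 * y ^ 2 := by linear_combination c ^ 2 * hA
    have sq3 : (x + S) ^ 2 * (1 - c ^ 2) ≤ c ^ 2 * y ^ 2 := by
      have h7 := mul_le_mul_of_nonneg_right sq2 hcc
      nlinarith [h7, sq1, hA2]
    have sq4 : (x + S) ^ 2 ≤ c ^ 2 * Z ^ 2 := by nlinarith [sq3, hZ]
    nlinarith [sq4, mul_nonneg hc0.le hZ0]

set_option maxHeartbeats 1000000 in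
/-- bounds for the characteristic root `E = (a⁻¹λ + |ξ'|²)^{1/2}` on the sector. -/
theorem characteristic_root_two_sided_bound
    (N : ℕ) (hN : 2 ≤ N) (ε a : ℝ)
    (hε0 : 0 < ε) (hε1 : ε < Real.pi / 2) (ha : 0 < a) :
    ∃ d₁ d₂ : ℝ, 0 < d₁ ∧ 0 < d₂ ∧
      ∀ l : ℂ, l ≠ 0 → |Complex.arg l| ≤ Real.pi - ε →
        ∀ ξ' : EuclideanSpace ℝ (Fin (N - 1)),
          d₁ * (Real.sqrt ‖l‖ + ‖ξ'‖) ≤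
              (((a : ℂ)⁻¹ * l + (‖ξ'‖ : ℂ) ^ 2) ^ (1 / 2 : ℂ)).re ∧
            (((a : ℂ)⁻¹ * l + (‖ξ'‖ : ℂ) ^ 2) ^ (1 / 2 : ℂ)).re ≤
              ‖(((a : ℂ)⁻¹ * l + (‖ξ'‖ : ℂ) ^ 2) ^ (1 / 2 : ℂ))‖ ∧
            ‖(((a : ℂ)⁻¹ * l + (‖ξ'‖ : ℂ) ^ 2) ^ (1 / 2 : ℂ))‖ ≤
              d₂ * (Real.sqrt ‖l‖ + ‖ξ'‖) := by
  have hπ := Real.pi_pos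
  obtain ⟨c, hcdef⟩ : ∃ c, c = Real.cos ε := ⟨_, rfl⟩
  have hc0 : 0 < c := hcdef ▸ Real.cos_pos_of_mem_Ioo ⟨by linarith, hε1⟩
  have hc1 : c < 1 := by
    have h := Real.cos_lt_cos_of_nonneg_of_le_pi le_rfl (by linarith) hε0
    rw [hcdef]; simpa using h
  obtain ⟨k, hkdef⟩ : ∃ k, k = Real.sqrt ((1 - c) / 2) := ⟨_, rfl⟩
  have hk0 : 0 < k := hkdef ▸ Real.sqrt_pos.2 (by linarith)
  have hk2 : k ^ 2 = (1 - c) / 2 := hkdef ▸ Real.sq_sqrt (by linarith)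
  have hia : 0 < a⁻¹ := inv_pos.2 ha
  obtain ⟨m, hmdef⟩ : ∃ m, m = min a⁻¹ 1 := ⟨_, rfl⟩
  obtain ⟨M, hMdef⟩ : ∃ M, M = max a⁻¹ 1 := ⟨_, rfl⟩
  have hm0 : 0 < m := hmdef ▸ lt_min hia one_pos
  have hm1 : m ≤ a⁻¹ := hmdef ▸ min_le_left _ _
  have hm2 : m ≤ 1 := hmdef ▸ min_le_right _ _
  have hM1 : a⁻¹ ≤ M := hMdef ▸ le_max_left _ _
  have hM2 : (1:ℝ) ≤ M := hMdef ▸ le_max_right _ _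
  have hM0 : 0 < M := lt_of_lt_of_le one_pos hM2
  obtain ⟨sε, hsedef⟩ : ∃ s, s = Real.sin (ε / 2) := ⟨_, rfl⟩
  have hsε : 0 < sε := hsedef ▸ Real.sin_pos_of_pos_of_lt_pi (by linarith) (by linarith)
  refine ⟨sε * Real.sqrt (k * m / 2), Real.sqrt M, by positivity, Real.sqrt_pos.2 hM0, ?_⟩
  intro l hl harg ξ'
  have ht : (0:ℝ) ≤ ‖ξ'‖ := norm_nonneg _
  obtain ⟨t, htdef⟩ : ∃ t, t = ‖ξ'‖ := ⟨_, rfl⟩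
  rw [← htdef]
  rw [show ((t : ℂ)) ^ 2 = ((t ^ 2 : ℝ) : ℂ) by push_cast; ring]
  rw [← htdef] at ht
  obtain ⟨r, hrdef⟩ : ∃ r, r = ‖l‖ := ⟨_, rfl⟩
  have hr0 : 0 < r := hrdef ▸ norm_pos_iff.2 hl
  rw [← hrdef]
  set w : ℂ := (a : ℂ)⁻¹ * l with hwdef
  set z : ℂ := w + ((t ^ 2 : ℝ) : ℂ) with hzdef
  have hz_re : z.re = w.re + t ^ 2 := by
    rw [hzdef, Complex.add_re, Complex.ofReal_re]
  have hz_im : z.im = w.im := by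
    rw [hzdef, Complex.add_im, Complex.ofReal_im, add_zero]
  have haw : ‖w‖ = a⁻¹ * r := by
    rw [hwdef, norm_mul, norm_inv, Complex.norm_real, Real.norm_eq_abs, abs_of_pos ha, hrdef]
  have haw_sq : (a⁻¹ * r) ^ 2 = w.re ^ 2 + w.im ^ 2 := by
    rw [← haw, Complex.sq_norm, Complex.normSq_apply]; ring
  have hw_re : w.re = a⁻¹ * l.re := by
    rw [hwdef, show (a : ℂ)⁻¹ = ((a⁻¹ : ℝ) : ℂ) by push_cast; ring]
    simp [Complex.mul_re]
  -- Re l ≥ -c |l|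
  have hre_l : -c * r ≤ l.re := by
    have h1 : Real.cos (Real.pi - ε) ≤ Real.cos |l.arg| :=
      Real.cos_le_cos_of_nonneg_of_le_pi (abs_nonneg _) (by linarith) harg
    rw [Real.cos_abs, Complex.cos_arg hl, Real.cos_pi_sub] at h1
    rw [hrdef] at hr0 ⊢
    rw [hcdef]
    have := (le_div_iff₀ hr0).1 h1
    linarith only [this]
  have hre_w : -c * (a⁻¹ * r) ≤ w.re := by
    rw [hw_re]
    have h2 := mul_le_mul_of_nonneg_left hre_l hia.le
    nlinarith only [h2]
  have habsz_sq : (‖z‖) ^ 2 = (w.re + t ^ 2) ^ 2 + w.im ^ 2 := by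
    rw [Complex.sq_norm, Complex.normSq_apply, hz_re, hz_im]; ring
  -- lower bound for |z|
  have hz_low : k * (a⁻¹ * r + t ^ 2) ≤ ‖z‖ := by
    apply aux_sq_le _ _ (by positivity) (norm_nonneg z)
    rw [habsz_sq, mul_pow, hk2]
    exact aux_low c (a⁻¹ * r) (t ^ 2) w.re w.im hc0 hc1 (sq_nonneg t) haw_sq hre_w
  have habsz_pos : 0 < ‖z‖ := by
    have : 0 < k * (a⁻¹ * r + t ^ 2) := by positivity
    linarith only [this, hz_low]
  have hz0 : z ≠ 0 := by
    intro h; rw [h] at habsz_pos; simp at habsz_pos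
  -- upper bound for |z|
  have hz_up : ‖z‖ ≤ a⁻¹ * r + t ^ 2 := by
    calc ‖z‖ ≤ ‖w‖ + ‖(((t ^ 2 : ℝ) : ℂ))‖ :=
          norm_add_le _ _
      _ = a⁻¹ * r + t ^ 2 := by
          rw [haw, Complex.norm_real, Real.norm_eq_abs, abs_of_nonneg (sq_nonneg t)]
  -- Re z ≥ -c |z|
  have hre_z : -c * ‖z‖ ≤ z.re := by
    rw [hz_re]
    exact aux_re c (a⁻¹ * r) (t ^ 2) w.re w.im (‖z‖) hc0 hc1 (sq_nonneg t)
      (by positivity) haw_sq hre_w (norm_nonneg z) habsz_sq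
  -- |arg z| ≤ π - ε
  have harg_z : |z.arg| ≤ Real.pi - ε := by
    by_contra hcon
    push_neg at hcon
    have hle : |z.arg| ≤ Real.pi :=
      abs_le.2 ⟨(Complex.neg_pi_lt_arg z).le, Complex.arg_le_pi z⟩
    have h4 := Real.cos_lt_cos_of_nonneg_of_le_pi (by linarith) hle hcon
    rw [Real.cos_abs, Complex.cos_arg hz0, Real.cos_pi_sub, ← hcdef] at h4
    have := (div_lt_iff₀ habsz_pos).1 h4
    linarith only [hre_z, this]
  have hcos_half : sε ≤ Real.cos (z.arg / 2) := by
    have habs2 : |z.arg / 2| ≤ (Real.pi - ε) / 2 := by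
      rw [abs_div, abs_two]; linarith only [harg_z]
    have h5 := Real.cos_le_cos_of_nonneg_of_le_pi (abs_nonneg _) (by linarith) habs2
    rw [Real.cos_abs] at h5
    have h6 : Real.cos ((Real.pi - ε) / 2) = sε := by
      rw [show (Real.pi - ε) / 2 = Real.pi / 2 - ε / 2 by ring, Real.cos_pi_div_two_sub, hsedef]
    linarith only [h5, h6]
  have h12 : (1 / 2 : ℂ) = ((1 / 2 : ℝ) : ℂ) := by norm_num
  have hE_abs : ‖z ^ (1 / 2 : ℂ)‖ = Real.sqrt (‖z‖) := by
    rw [Complex.norm_cpow_of_ne_zero hz0, h12]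
    simp [Real.sqrt_eq_rpow]
  have hE_re : (z ^ (1 / 2 : ℂ)).re = Real.sqrt (‖z‖) * Real.cos (z.arg / 2) := by
    rw [Complex.cpow_def_of_ne_zero hz0, Complex.exp_re, h12]
    simp only [Complex.mul_re, Complex.mul_im, Complex.ofReal_re, Complex.ofReal_im,
      Complex.log_re, Complex.log_im, mul_zero, zero_mul, sub_zero, add_zero, zero_add]
    rw [← Real.rpow_def_of_pos habsz_pos, ← Real.sqrt_eq_rpow, mul_one_div]
  have hsqrtR : 0 ≤ Real.sqrt (‖z‖) := Real.sqrt_nonneg _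
  have hsr : Real.sqrt r ^ 2 = r := Real.sq_sqrt hr0.le
  have hsrn : 0 ≤ Real.sqrt r := Real.sqrt_nonneg r
  refine ⟨?_, Complex.re_le_norm _, ?_⟩
  · -- lower bound
    have key : Real.sqrt (k * m / 2) * (Real.sqrt r + t) ≤ Real.sqrt (‖z‖) := by
      rw [show Real.sqrt (k * m / 2) * (Real.sqrt r + t)
            = Real.sqrt (k * m / 2 * (Real.sqrt r + t) ^ 2) by
          rw [Real.sqrt_mul (by positivity), Real.sqrt_sq (by positivity)]]
      apply Real.sqrt_le_sqrt
      have h3 : (Real.sqrt r + t) ^ 2 ≤ 2 * (r + t ^ 2) := by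
        linarith only [sq_nonneg (Real.sqrt r - t), hsr]
      have h4 : m * (r + t ^ 2) ≤ a⁻¹ * r + t ^ 2 := by
        have e1 := mul_le_mul_of_nonneg_right hm1 hr0.le
        have e2 := mul_le_mul_of_nonneg_right hm2 (sq_nonneg t)
        linarith only [e1, e2]
      calc k * m / 2 * (Real.sqrt r + t) ^ 2 ≤ k * m / 2 * (2 * (r + t ^ 2)) := by
            apply mul_le_mul_of_nonneg_left h3 (by positivity)
        _ = k * (m * (r + t ^ 2)) := by ring
        _ ≤ k * (a⁻¹ * r + t ^ 2) := mul_le_mul_of_nonneg_left h4 hk0.le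
        _ ≤ ‖z‖ := hz_low
    rw [hE_re]
    calc sε * Real.sqrt (k * m / 2) * (Real.sqrt r + t)
        = sε * (Real.sqrt (k * m / 2) * (Real.sqrt r + t)) := by ring
      _ ≤ sε * Real.sqrt (‖z‖) := mul_le_mul_of_nonneg_left key hsε.le
      _ = Real.sqrt (‖z‖) * sε := by ring
      _ ≤ Real.sqrt (‖z‖) * Real.cos (z.arg / 2) :=
          mul_le_mul_of_nonneg_left hcos_half hsqrtR
  · -- upper bound
    rw [hE_abs]
    rw [show Real.sqrt M * (Real.sqrt r + t) = Real.sqrt (M * (Real.sqrt r + t) ^ 2) by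
      rw [Real.sqrt_mul hM0.le, Real.sqrt_sq (by positivity)]]
    apply Real.sqrt_le_sqrt
    have h5 : a⁻¹ * r + t ^ 2 ≤ M * (Real.sqrt r + t) ^ 2 := by
      have hexp : (Real.sqrt r + t) ^ 2 = r + 2 * Real.sqrt r * t + t ^ 2 := by
        rw [add_sq, hsr]
      rw [hexp]
      have e1 := mul_le_mul_of_nonneg_right hM1 hr0.le
      have e2 : t ^ 2 ≤ M * t ^ 2 := le_mul_of_one_le_left (sq_nonneg t) hM2
      have e3 : 0 ≤ M * (2 * Real.sqrt r * t) :=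
        mul_nonneg hM0.le (by positivity)
      linarith only [e1, e2, e3]
    linarith only [hz_up, h5]
end

section
/- Let N ≥ 2 be an integer, 0 < ε < π/2 and a > 0. Then there exists a constant C > 0, depending only on ε and a, such that for every λ ∈ Σ_ε and every nonzero ξ' ∈ ℝ^{N−1}: |(aλ + |ξ'|²)^{1/2} − |ξ'| − aλ/(2|ξ'|)| ≤ C |λ|² / |ξ'|³, where the square root is the principal one. -/
/-- Taylor expansion estimate for the principal square root
`(aλ + |ξ'|²)^{1/2} = |ξ'| + aλ/(2|ξ'|) + O(|λ|²/|ξ'|³)` on the sector. -/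
theorem sqrt_symbol_expansion_estimate
    (N : ℕ) (hN : 2 ≤ N) (ε a : ℝ)
    (hε0 : 0 < ε) (hε1 : ε < Real.pi / 2) (ha : 0 < a) :
    ∃ C : ℝ, 0 < C ∧
      ∀ l : ℂ, l ≠ 0 → |Complex.arg l| ≤ Real.pi - ε →
        ∀ ξ' : EuclideanSpace ℝ (Fin (N - 1)), ξ' ≠ 0 →
          ‖((a : ℂ) * l + (‖ξ'‖ : ℂ) ^ 2) ^ (1 / 2 : ℂ) -
              (‖ξ'‖ : ℂ) - (a : ℂ) * l / (2 * (‖ξ'‖ : ℂ))‖ ≤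
            C * ‖l‖ ^ 2 / ‖ξ'‖ ^ 3 := by
  refine ⟨a ^ 2 / 2, by positivity, ?_⟩
  intro l _ _ ξ' hξ
  set t : ℝ := ‖ξ'‖ with ht
  have ht0 : 0 < t := norm_pos_iff.mpr hξ
  set z : ℂ := (a : ℂ) * l + (t : ℂ) ^ 2 with hzdef
  set s : ℂ := z ^ (1 / 2 : ℂ) with hsdef
  have hs2 : s ^ 2 = z := by
    rw [hsdef, show (1 / 2 : ℂ) = ((2 : ℕ) : ℂ)⁻¹ by norm_num]
    exact Complex.cpow_nat_inv_pow z two_ne_zero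
  have hre : 0 ≤ s.re := by
    rw [hsdef, show (1 / 2 : ℂ) = (2⁻¹ : ℂ) by norm_num, Complex.cpow_inv_two_re]
    exact Real.sqrt_nonneg _
  have hstre : t ≤ (s + (t : ℂ)).re := by
    simp only [Complex.add_re, Complex.ofReal_re]; linarith
  have hst : t ≤ ‖s + (t : ℂ)‖ := hstre.trans (Complex.re_le_norm _)
  have hstne : s + (t : ℂ) ≠ 0 := by
    intro h
    rw [h, norm_zero] at hst
    linarith
  have hal : (a : ℂ) * l = s ^ 2 - (t : ℂ) ^ 2 := by rw [hs2, hzdef]; ring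
  have htne : (t : ℂ) ≠ 0 := by exact_mod_cast ht0.ne'
  have hE : s - (t : ℂ) - (a : ℂ) * l / (2 * (t : ℂ)) = -(s - (t : ℂ)) ^ 2 / (2 * (t : ℂ)) := by
    rw [hal]; field_simp; ring
  have hsm : s - (t : ℂ) = (a : ℂ) * l / (s + (t : ℂ)) := by
    rw [hal]; field_simp; ring
  have habs1 : ‖s - (t : ℂ)‖ ≤ a * ‖l‖ / t := by
    rw [hsm, norm_div, norm_mul, Complex.norm_real, Real.norm_eq_abs, abs_of_pos ha]
    apply div_le_div_of_nonneg_left _ ht0 hst <;> positivity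
  rw [hE, norm_div, norm_neg, norm_pow, norm_mul, Complex.norm_two, Complex.norm_real,
    Real.norm_eq_abs, abs_of_pos ht0]
  calc ‖s - (t : ℂ)‖ ^ 2 / (2 * t) ≤ (a * ‖l‖ / t) ^ 2 / (2 * t) := by
        gcongr
    _ = a ^ 2 / 2 * ‖l‖ ^ 2 / t ^ 3 := by field_simp
end

section
/- Let N ≥ 2, 0 < ε < π/2, and let α, β ∈ ℝ satisfy α > 0 and α + β > 0; set γ_A = (α+β)^{−1} and γ_B = α^{−1}. Then there exists a constant C > 0, depending only on ε, α, β, such that for every λ ∈ Σ_ε and every nonzero ξ' ∈ ℝ^{N−1} with |λ| ≤ |ξ'|²: |AB − |ξ'|² − ((γ_A + γ_B)/2) λ| ≤ C |λ|² / |ξ'|². -/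
lemma sqrt_mul_self' (u : ℂ) (hu : u ≠ 0) :
    u ^ (1/2 : ℂ) * u ^ (1/2 : ℂ) = u := by
  rw [← Complex.cpow_add _ _ hu]
  norm_num

lemma re_sqrt_nonneg (u : ℂ) : 0 ≤ (u ^ (1/2 : ℂ)).re := by
  rcases eq_or_ne u 0 with rfl | hu
  · rw [Complex.zero_cpow (by norm_num)]; simp
  · rw [Complex.cpow_def_of_ne_zero hu, Complex.exp_re]
    apply mul_nonneg (Real.exp_pos _).le
    apply Real.cos_nonneg_of_mem_Icc
    have h1 := Complex.neg_pi_lt_arg u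
    have h2 := Complex.arg_le_pi u
    constructor <;>
      simp [Complex.mul_im, Complex.log_im] <;> linarith

lemma re_sqrt_pos (u : ℂ) (hu : u ≠ 0) (ha : u.arg ≠ Real.pi) :
    0 < (u ^ (1/2 : ℂ)).re := by
  rw [Complex.cpow_def_of_ne_zero hu, Complex.exp_re]
  apply mul_pos (Real.exp_pos _)
  apply Real.cos_pos_of_mem_Ioo
  have h1 := Complex.neg_pi_lt_arg u
  have h2 := lt_of_le_of_ne (Complex.arg_le_pi u) ha
  constructor <;>
    simp [Complex.mul_im, Complex.log_im] <;> linarith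

lemma cpow_half_scale (x : ℝ) (hx : 0 < x) (u : ℂ) (hu : u ≠ 0) (ha : u.arg ≠ Real.pi) :
    ((x:ℂ)^2 * u) ^ (1/2:ℂ) = (x:ℂ) * u ^ (1/2:ℂ) := by
  have hx0 : (x:ℂ) ≠ 0 := by exact_mod_cast hx.ne'
  have hxu : (x:ℂ)^2 * u ≠ 0 := by
    exact mul_ne_zero (pow_ne_zero _ hx0) hu
  have h1 := sqrt_mul_self' _ hxu
  have h2 := sqrt_mul_self' u hu
  set v := ((x:ℂ)^2*u)^(1/2:ℂ) with hv
  set s := u^(1/2:ℂ) with hs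
  have hvw : (v - (x:ℂ)*s) * (v + (x:ℂ)*s) = 0 := by
    have : ((x:ℂ)*s) * ((x:ℂ)*s) = (x:ℂ)^2 * u := by
      calc ((x:ℂ)*s) * ((x:ℂ)*s) = (x:ℂ)^2 * (s*s) := by ring
      _ = (x:ℂ)^2 * u := by rw [h2]
    calc (v - (x:ℂ)*s) * (v + (x:ℂ)*s) = v*v - ((x:ℂ)*s)*((x:ℂ)*s) := by ring
    _ = 0 := by rw [h1, this]; ring
  rcases mul_eq_zero.1 hvw with h | h
  · exact sub_eq_zero.1 h
  · exfalso
    have hveq : v = -((x:ℂ)*s) := by linear_combination h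
    have hre1 : 0 ≤ v.re := re_sqrt_nonneg _
    have hre2 : 0 < s.re := re_sqrt_pos u hu ha
    rw [hveq] at hre1
    simp only [Complex.neg_re, Complex.mul_re, Complex.ofReal_re, Complex.ofReal_im,
      zero_mul, sub_zero] at hre1
    nlinarith

lemma sqrt_quad (z : ℂ) (hz : 1 + z ≠ 0) :
    ‖(1+z) ^ (1/2:ℂ) - 1 - z/2‖ ≤ ‖z‖ ^ 2 / 2 := by
  set w := (1+z)^(1/2:ℂ) with hwdef
  have hw : w * w = 1 + z := sqrt_mul_self' _ hz
  have hre : 0 ≤ w.re := re_sqrt_nonneg _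
  have h1 : (1:ℝ) ≤ ‖1 + w‖ := by
    have h2 : (1:ℝ) ≤ (1+w).re := by
      simp only [Complex.add_re, Complex.one_re]; linarith
    exact h2.trans (Complex.re_le_norm _)
  have hne : 1 + w ≠ 0 := by
    intro h; rw [h] at h1; simp at h1; linarith
  have key : w - 1 - z/2 = -(z^2) / (2 * (1+w)^2) := by
    have hz' : z = w*w - 1 := by rw [hw]; ring
    rw [eq_div_iff (mul_ne_zero two_ne_zero (pow_ne_zero _ hne))]
    rw [hz']; ring
  rw [key, norm_div, norm_neg, norm_pow, norm_mul, norm_pow]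
  have hc : ‖(2:ℂ)‖ = 2 := by simp
  rw [hc]
  have hd : (2:ℝ) ≤ 2 * ‖1+w‖ ^ 2 := by nlinarith
  exact div_le_div_of_nonneg_left (by positivity) (by norm_num) hd

lemma one_add_ne_and_arg (z : ℂ) (h : z.im = 0 → 0 < z.re) :
    1 + z ≠ 0 ∧ (1+z).arg ≠ Real.pi := by
  by_cases him : z.im = 0
  · have hr := h him
    constructor
    · intro h0
      have : (1+z).re = 0 := by rw [h0]; simp
      simp only [Complex.add_re, Complex.one_re] at this; linarith
    · intro hp
      rw [Complex.arg_eq_pi_iff] at hp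
      simp only [Complex.add_re, Complex.one_re] at hp; linarith [hp.1]
  · have him' : (1+z).im ≠ 0 := by
      simpa [Complex.add_im] using him
    constructor
    · intro h0; apply him'; rw [h0]; simp
    · intro hp; rw [Complex.arg_eq_pi_iff] at hp; exact him' hp.2

/-- The characteristic root `A = ((α+β)⁻¹ λ + |ξ'|²)^{1/2}` (principal square root),
written as a function of `|ξ'|`. -/
noncomputable def lameA (α β : ℝ) (l : ℂ) (x : ℝ) : ℂ :=
  (((α + β : ℝ) : ℂ)⁻¹ * l + (x : ℂ) ^ 2) ^ (1 / 2 : ℂ)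

/-- The characteristic root `B = (α⁻¹ λ + |ξ'|²)^{1/2}` (principal square root),
written as a function of `|ξ'|`. -/
noncomputable def lameB (α : ℝ) (l : ℂ) (x : ℝ) : ℂ :=
  ((α : ℂ)⁻¹ * l + (x : ℂ) ^ 2) ^ (1 / 2 : ℂ)

set_option maxHeartbeats 1600000 in
/-- expansion `AB = |ξ'|² + ((γ_A+γ_B)/2)λ + O(|λ|²/|ξ'|²)`
in the regime `|λ| ≤ |ξ'|²`. -/
theorem lame_AB_expansion_estimate
    (N : ℕ) (hN : 2 ≤ N) (ε α β : ℝ)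
    (hε0 : 0 < ε) (hε1 : ε < Real.pi / 2) (hα : 0 < α) (hαβ : 0 < α + β) :
    ∃ C : ℝ, 0 < C ∧
      ∀ l : ℂ, l ≠ 0 → |Complex.arg l| ≤ Real.pi - ε →
        ∀ ξ' : EuclideanSpace ℝ (Fin (N - 1)), ξ' ≠ 0 →
          ‖l‖ ≤ ‖ξ'‖ ^ 2 →
          ‖lameA α β l ‖ξ'‖ * lameB α l ‖ξ'‖ - (‖ξ'‖ : ℂ) ^ 2 -
              (((((α + β)⁻¹ + α⁻¹) / 2 : ℝ)) : ℂ) * l‖ ≤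
            C * (‖l‖) ^ 2 / ‖ξ'‖ ^ 2 := by
  set gA : ℝ := (α + β)⁻¹ with hgA
  set gB : ℝ := α⁻¹ with hgB
  have hgA0 : 0 < gA := by positivity
  have hgB0 : 0 < gB := by positivity
  set K : ℝ := gA*gB/4 + gB^2/2 + gA^2/2 + gA*gB^2/4 + gB*gA^2/4 + gA^2*gB^2/4 with hK
  have hK0 : 0 < K := by positivity
  clear_value K gA gB
  refine ⟨K, hK0, ?_⟩
  intro l hl0 harg ξ' hξ hle
  set x : ℝ := ‖ξ'‖ with hxdef
  have hx : 0 < x := by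
    simpa [hxdef] using norm_pos_iff.2 hξ
  clear_value x
  have hx0 : (x:ℂ) ≠ 0 := by exact_mod_cast hx.ne'
  -- l is not on the closed negative real axis
  have himl : l.im = 0 → 0 < l.re := by
    intro him
    by_contra hre
    push_neg at hre
    have hre' : l.re < 0 := by
      rcases lt_or_eq_of_le hre with h | h
      · exact h
      · exact absurd (Complex.ext (by simpa using h) (by simpa using him)) hl0
    have : l.arg = Real.pi := Complex.arg_eq_pi_iff.2 ⟨hre', him⟩
    rw [this] at harg
    rw [abs_of_pos Real.pi_pos] at harg
    linarith
  -- the normalized perturbations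
  set a : ℂ := ((gA / x^2 : ℝ) : ℂ) * l with hadef
  set b : ℂ := ((gB / x^2 : ℝ) : ℂ) * l with hbdef
  clear_value a b
  have hproc : ∀ g : ℝ, 0 < g →
      (1 + ((g / x^2 : ℝ) : ℂ) * l ≠ 0 ∧ (1 + ((g / x^2 : ℝ) : ℂ) * l).arg ≠ Real.pi) := by
    intro g hg
    apply one_add_ne_and_arg
    intro him
    simp only [Complex.mul_im, Complex.ofReal_re, Complex.ofReal_im, zero_mul,
      add_zero] at him
    simp only [Complex.mul_re, Complex.ofReal_re, Complex.ofReal_im, zero_mul, sub_zero]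
    have hgx : 0 < g / x^2 := by positivity
    have : l.im = 0 := by
      rcases mul_eq_zero.1 him with h | h
      · exact absurd h hgx.ne'
      · exact h
    exact mul_pos hgx (himl this)
  obtain ⟨ha1, ha2⟩ := hproc gA hgA0
  obtain ⟨hb1, hb2⟩ := hproc gB hgB0
  rw [← hadef] at ha1 ha2
  rw [← hbdef] at hb1 hb2
  -- factor the roots
  have habC : (α:ℂ) + (β:ℂ) ≠ 0 := by
    have : ((α + β : ℝ) : ℂ) ≠ 0 := by exact_mod_cast hαβ.ne'
    push_cast at this; exact this
  have haC : (α:ℂ) ≠ 0 := by exact_mod_cast hα.ne'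
  have hbaseA : ((α + β : ℝ) : ℂ)⁻¹ * l + (x : ℂ) ^ 2 = (x:ℂ)^2 * (1 + a) := by
    rw [hadef, hgA]
    push_cast
    field_simp
    ring
  have hbaseB : ((α : ℝ) : ℂ)⁻¹ * l + (x : ℂ) ^ 2 = (x:ℂ)^2 * (1 + b) := by
    rw [hbdef, hgB]
    push_cast
    field_simp
    ring
  set sA : ℂ := (1 + a) ^ (1/2:ℂ) with hsA
  set sB : ℂ := (1 + b) ^ (1/2:ℂ) with hsB
  clear_value sA sB
  have hA : lameA α β l x = (x:ℂ) * sA := by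
    rw [hsA, lameA, hbaseA]
    exact cpow_half_scale x hx _ ha1 ha2
  have hB : lameB α l x = (x:ℂ) * sB := by
    rw [hsB, lameB, hbaseB]
    exact cpow_half_scale x hx _ hb1 hb2
  set dA : ℂ := sA - 1 - a/2 with hdA
  set dB : ℂ := sB - 1 - b/2 with hdB
  clear_value dA dB
  have hqA : ‖dA‖ ≤ ‖a‖ ^ 2 / 2 := by
    rw [hdA, hsA]; exact sqrt_quad a ha1
  have hqB : ‖dB‖ ≤ ‖b‖ ^ 2 / 2 := by
    rw [hdB, hsB]; exact sqrt_quad b hb1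
  -- main algebraic identity
  have hcl : (((gA + gB) / 2 : ℝ) : ℂ) * l = (x:ℂ)^2 * ((a+b)/2) := by
    rw [hadef, hbdef]
    push_cast
    field_simp
  have hE : lameA α β l x * lameB α l x - (x:ℂ)^2 - (((gA + gB)/2 : ℝ):ℂ) * l
      = (x:ℂ)^2 * (a*b/4 + dA + dB + a*dB/2 + b*dA/2 + dA*dB) := by
    rw [hA, hB, hcl]
    have hsAe : sA = 1 + a/2 + dA := by rw [hdA]; ring
    have hsBe : sB = 1 + b/2 + dB := by rw [hdB]; ring
    rw [hsAe, hsBe]; ring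
  -- abs bounds
  set t : ℝ := ‖l‖ / x^2 with htdef
  have ht0 : 0 ≤ t := by positivity
  clear_value t
  have ht1 : t ≤ 1 := by
    rw [htdef, div_le_one (by positivity)]
    exact hle
  have hta : ‖a‖ = gA * t := by
    rw [hadef, norm_mul, Complex.norm_real, Real.norm_eq_abs,
      abs_of_pos (div_pos hgA0 (by positivity)), htdef]
    field_simp
  have htb : ‖b‖ = gB * t := by
    rw [hbdef, norm_mul, Complex.norm_real, Real.norm_eq_abs,
      abs_of_pos (div_pos hgB0 (by positivity)), htdef]
    field_simp
  set R : ℂ := a*b/4 + dA + dB + a*dB/2 + b*dA/2 + dA*dB with hR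
  clear_value R
  have habsR : ‖R‖ ≤ K * t^2 := by
    rw [hR]
    have tri : ‖a*b/4 + dA + dB + a*dB/2 + b*dA/2 + dA*dB‖ ≤ ‖a‖ * ‖b‖ / 4 + ‖dA‖
        + ‖dB‖ + ‖a‖ * ‖dB‖ / 2
        + ‖b‖ * ‖dA‖ / 2 + ‖dA‖ * ‖dB‖ := by
      calc ‖a*b/4 + dA + dB + a*dB/2 + b*dA/2 + dA*dB‖
          ≤ ‖a*b/4 + dA + dB + a*dB/2 + b*dA/2‖ + ‖dA*dB‖ :=
            norm_add_le _ _
        _ ≤ ‖a*b/4 + dA + dB + a*dB/2‖ + ‖b*dA/2‖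
            + ‖dA*dB‖ := by gcongr; exact norm_add_le _ _
        _ ≤ ‖a*b/4 + dA + dB‖ + ‖a*dB/2‖ + ‖b*dA/2‖
            + ‖dA*dB‖ := by gcongr; exact norm_add_le _ _
        _ ≤ ‖a*b/4 + dA‖ + ‖dB‖ + ‖a*dB/2‖
            + ‖b*dA/2‖ + ‖dA*dB‖ := by
              gcongr; exact norm_add_le _ _
        _ ≤ ‖a*b/4‖ + ‖dA‖ + ‖dB‖ + ‖a*dB/2‖
            + ‖b*dA/2‖ + ‖dA*dB‖ := by
              gcongr; exact norm_add_le _ _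
        _ = ‖a‖ * ‖b‖ / 4 + ‖dA‖ + ‖dB‖
            + ‖a‖ * ‖dB‖ / 2 + ‖b‖ * ‖dA‖ / 2
            + ‖dA‖ * ‖dB‖ := by
              simp [norm_div, norm_mul]
    have hA0 : 0 ≤ ‖dA‖ := norm_nonneg _
    have hB0 : 0 ≤ ‖dB‖ := norm_nonneg _
    rw [hta] at tri hqA
    rw [htb] at tri hqB
    calc ‖a*b/4 + dA + dB + a*dB/2 + b*dA/2 + dA*dB‖ ≤ _ := tri
      _ ≤ (gA*t) * (gB*t) / 4 + (gA*t)^2/2 + (gB*t)^2/2 + (gA*t) * ((gB*t)^2/2) / 2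
          + (gB*t) * ((gA*t)^2/2) / 2 + ((gA*t)^2/2) * ((gB*t)^2/2) := by
        gcongr
      _ ≤ K * t^2 := by
        rw [hK]
        have h3 : t^3 ≤ t^2 := pow_le_pow_of_le_one ht0 ht1 (by norm_num)
        have h4 : t^4 ≤ t^2 := pow_le_pow_of_le_one ht0 ht1 (by norm_num)
        have c2 : (0:ℝ) ≤ gA*gB^2/4 + gB*gA^2/4 := by positivity
        have c3 : (0:ℝ) ≤ gA^2*gB^2/4 := by positivity
        nlinarith [mul_le_mul_of_nonneg_left h3 c2, mul_le_mul_of_nonneg_left h4 c3]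
  -- conclude
  have hfinal : ‖lameA α β l x * lameB α l x - (x:ℂ)^2
      - (((gA + gB)/2 : ℝ):ℂ) * l‖ ≤ K * ‖l‖ ^ 2 / x^2 := by
    rw [hE, norm_mul]
    have hxx : ‖(x:ℂ)^2‖ = x^2 := by
      rw [norm_pow, Complex.norm_real, Real.norm_eq_abs, abs_of_pos hx]
    rw [hxx]
    calc x^2 * ‖R‖ ≤ x^2 * (K * t^2) := by
          have := sq_nonneg x
          exact mul_le_mul_of_nonneg_left habsR (by positivity)
      _ = K * ‖l‖ ^ 2 / x^2 := by
          rw [htdef]; field_simp [hx.ne']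
  exact hfinal
end

section
/- Let N ≥ 2, 0 < ε < π/2, and let α, β ∈ ℝ satisfy α > 0 and α + β > 0. Then there exists r > 0, depending only on ε, α, β, such that for every λ ∈ Σ_ε and every ξ' ∈ ℝ^{N−1} with |ξ'|² ≤ r|λ|: |𝓛| ≥ (1/(2α²)) |λ|². -/
/-- The Lopatinskii determinant `𝓛 = 4AB|ξ'|² − (B² + |ξ'|²)²`. -/
noncomputable def lopDet (α β : ℝ) (l : ℂ) (x : ℝ) : ℂ :=
  4 * lameA α β l x * lameB α l x * (x : ℂ) ^ 2 -
    (lameB α l x ^ 2 + (x : ℂ) ^ 2) ^ 2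

lemma cpow_half_sq (z : ℂ) : (z ^ (1 / 2 : ℂ)) ^ 2 = z := by
  by_cases h : z = 0
  · rw [h, Complex.zero_cpow (by norm_num : (1 / 2 : ℂ) ≠ 0)]
    simp
  · rw [sq, ← Complex.cpow_add _ _ h]
    norm_num

lemma lop_final_arith (c1 c2 r L t a q D : ℝ)
    (hL0 : 0 < L) (ht0 : 0 ≤ t) (htr : t ≤ r * L)
    (hr0 : 0 < r) (hr1 : r ≤ c2 / 2) (hr2 : 4 * r * (c1 + 3 * c2) ≤ c2 ^ 2 / 2)
    (hc1 : 0 < c1) (hc2 : 0 < c2)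
    (ha0 : 0 ≤ a) (hAB : a ≤ (c1 + c2) * L + 2 * t)
    (hlow : c2 * L - 2 * t ≤ q) (hq0 : 0 ≤ q)
    (hmain : q ^ 2 - 4 * a * t ≤ D) :
    c2 ^ 2 / 2 * L ^ 2 ≤ D := by
  have hqlow0 : 0 ≤ c2 * L - 2 * t := by
    have h15 := mul_le_mul_of_nonneg_right hr1 hL0.le
    linarith
  have hqsq : (c2 * L - 2 * t) ^ 2 ≤ q ^ 2 := by nlinarith
  have h13 : a * t ≤ ((c1 + c2) * L + 2 * t) * t := mul_le_mul_of_nonneg_right hAB ht0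
  have htt : t * t ≤ (r * L) * (r * L) := mul_le_mul htr htr ht0 (by positivity)
  have htL : t * L ≤ (r * L) * L := mul_le_mul_of_nonneg_right htr hL0.le
  have hrr : r * r * L ^ 2 ≤ (c2 / 2) * r * L ^ 2 :=
    mul_le_mul_of_nonneg_right (mul_le_mul_of_nonneg_right hr1 hr0.le) (sq_nonneg L)
  have hr2L : 4 * r * (c1 + 3 * c2) * L ^ 2 ≤ c2 ^ 2 / 2 * L ^ 2 :=
    mul_le_mul_of_nonneg_right hr2 (sq_nonneg L)
  have p1 : (c1 + 2 * c2) * (t * L) ≤ (c1 + 2 * c2) * ((r * L) * L) :=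
    mul_le_mul_of_nonneg_left htL (by positivity)
  have hpos2 : 0 ≤ c2 * r * L ^ 2 := by positivity
  nlinarith [htt, hrr, hr2L, p1, hpos2, hqsq, h13, hmain]

/-- lower bound `|𝓛| ≥ |λ|²/(2α²)` in the regime `|ξ'|² ≤ r|λ|`. -/
theorem lopatinskii_lower_bound_large_lambda
    (N : ℕ) (hN : 2 ≤ N) (ε α β : ℝ)
    (hε0 : 0 < ε) (hε1 : ε < Real.pi / 2) (hα : 0 < α) (hαβ : 0 < α + β) :
    ∃ r : ℝ, 0 < r ∧
      ∀ l : ℂ, l ≠ 0 → |Complex.arg l| ≤ Real.pi - ε →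
        ∀ ξ' : EuclideanSpace ℝ (Fin (N - 1)),
          ‖ξ'‖ ^ 2 ≤ r * ‖l‖ →
          1 / (2 * α ^ 2) * ‖l‖ ^ 2 ≤ ‖lopDet α β l ‖ξ'‖‖ := by
  set c1 : ℝ := (α + β)⁻¹ with hc1def
  set c2 : ℝ := α⁻¹ with hc2def
  have hc1 : 0 < c1 := inv_pos.mpr hαβ
  have hc2 : 0 < c2 := inv_pos.mpr hα
  set r : ℝ := min (c2 / 2) (c2 ^ 2 / (8 * (c1 + 3 * c2))) with hrdef
  have hr0 : 0 < r := lt_min (by positivity) (by positivity)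
  have hr1 : r ≤ c2 / 2 := min_le_left _ _
  have hr2 : 4 * r * (c1 + 3 * c2) ≤ c2 ^ 2 / 2 := by
    have h : r ≤ c2 ^ 2 / (8 * (c1 + 3 * c2)) := min_le_right _ _
    have hpos : 0 < c1 + 3 * c2 := by positivity
    have hkey : c2 ^ 2 / (8 * (c1 + 3 * c2)) * (c1 + 3 * c2) = c2 ^ 2 / 8 := by
      field_simp
    have h2 := mul_le_mul_of_nonneg_right h hpos.le
    rw [hkey] at h2
    nlinarith
  clear_value c1 c2 r
  refine ⟨r, hr0, ?_⟩
  intro l hl _ ξ' hξ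
  set L : ℝ := ‖l‖ with hL
  have hL0 : 0 < L := norm_pos_iff.mpr hl
  set x : ℝ := ‖ξ'‖ with hx
  set t : ℝ := x ^ 2 with ht
  have ht0 : 0 ≤ t := sq_nonneg x
  have htr : t ≤ r * L := hξ
  clear_value L x t
  set A : ℂ := lameA α β l x with hA
  set B : ℂ := lameB α l x with hB
  clear_value A B
  have hA2 : A ^ 2 = (c1 : ℂ) * l + (x : ℂ) ^ 2 := by
    rw [hA, lameA, cpow_half_sq, hc1def]
    push_cast
    ring
  have hB2 : B ^ 2 = (c2 : ℂ) * l + (x : ℂ) ^ 2 := by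
    rw [hB, lameB, cpow_half_sq, hc2def]
    push_cast
    ring
  have habsx2 : ‖(x : ℂ) ^ 2‖ = t := by
    rw [norm_pow, Complex.norm_real, Real.norm_eq_abs, ht, sq_abs]
  have hAabs : (‖A‖) ^ 2 ≤ c1 * L + t := by
    rw [← norm_pow, hA2]
    calc ‖(c1 : ℂ) * l + (x : ℂ) ^ 2‖
        ≤ ‖(c1 : ℂ) * l‖ + ‖(x : ℂ) ^ 2‖ := norm_add_le _ _
      _ = c1 * L + t := by
          rw [norm_mul, Complex.norm_real, Real.norm_eq_abs, abs_of_pos hc1, habsx2, ← hL]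
  have hBabs : (‖B‖) ^ 2 ≤ c2 * L + t := by
    rw [← norm_pow, hB2]
    calc ‖(c2 : ℂ) * l + (x : ℂ) ^ 2‖
        ≤ ‖(c2 : ℂ) * l‖ + ‖(x : ℂ) ^ 2‖ := norm_add_le _ _
      _ = c2 * L + t := by
          rw [norm_mul, Complex.norm_real, Real.norm_eq_abs, abs_of_pos hc2, habsx2, ← hL]
  -- product bound
  have hABsq : (‖A‖ * ‖B‖) ^ 2 ≤ ((c1 + c2) * L + 2 * t) ^ 2 := by
    have h1 : (‖A‖) ^ 2 * (‖B‖) ^ 2 ≤ (c1 * L + t) * (c2 * L + t) :=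
      mul_le_mul hAabs hBabs (sq_nonneg _) (by positivity)
    nlinarith [sq_nonneg (c1 * L - c2 * L), hL0.le, ht0]
  have hAB : ‖A‖ * ‖B‖ ≤ (c1 + c2) * L + 2 * t := by
    have hp : (0 : ℝ) ≤ ‖A‖ * ‖B‖ := by positivity
    have hq : (0 : ℝ) ≤ (c1 + c2) * L + 2 * t := by positivity
    nlinarith
  -- lower bound on |B² + x²|
  set q : ℝ := ‖B ^ 2 + (x : ℂ) ^ 2‖ with hq
  clear_value q
  have hlow : c2 * L - 2 * t ≤ q := by
    have h3 : ‖(c2 : ℂ) * l‖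
        ≤ ‖(c2 : ℂ) * l + 2 * (x : ℂ) ^ 2‖ + ‖2 * (x : ℂ) ^ 2‖ := by
      have h4 := norm_add_le ((c2 : ℂ) * l + 2 * (x : ℂ) ^ 2) (-(2 * (x : ℂ) ^ 2))
      simpa using h4
    have h5 : ‖(c2 : ℂ) * l‖ = c2 * L := by
      rw [norm_mul, Complex.norm_real, Real.norm_eq_abs, abs_of_pos hc2, ← hL]
    have h6 : ‖2 * (x : ℂ) ^ 2‖ = 2 * t := by
      rw [norm_mul, habsx2]; simp
    have h7 : B ^ 2 + (x : ℂ) ^ 2 = (c2 : ℂ) * l + 2 * (x : ℂ) ^ 2 := by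
      rw [hB2]; ring
    rw [hq, h7]
    linarith [h3, h5.symm ▸ h3]
  -- main triangle inequality
  have hmain : q ^ 2 - 4 * (‖A‖ * ‖B‖) * t
      ≤ ‖lopDet α β l x‖ := by
    have h8 : ‖(B ^ 2 + (x : ℂ) ^ 2) ^ 2‖
        ≤ ‖lopDet α β l x‖ + ‖4 * A * B * (x : ℂ) ^ 2‖ := by
      have h9 := norm_add_le (4 * A * B * (x : ℂ) ^ 2 - (B ^ 2 + (x : ℂ) ^ 2) ^ 2)
        (-(4 * A * B * (x : ℂ) ^ 2))
      have h10 : lopDet α β l x = 4 * A * B * (x : ℂ) ^ 2 - (B ^ 2 + (x : ℂ) ^ 2) ^ 2 := by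
        rw [lopDet, hA, hB]
      rw [h10]
      calc ‖(B ^ 2 + (x : ℂ) ^ 2) ^ 2‖
          = ‖-((4 * A * B * (x : ℂ) ^ 2 - (B ^ 2 + (x : ℂ) ^ 2) ^ 2)
              + (-(4 * A * B * (x : ℂ) ^ 2)))‖ := by ring_nf
        _ = ‖(4 * A * B * (x : ℂ) ^ 2 - (B ^ 2 + (x : ℂ) ^ 2) ^ 2)
              + (-(4 * A * B * (x : ℂ) ^ 2))‖ := norm_neg _
        _ ≤ _ := by simpa using h9
    have h11 : ‖(B ^ 2 + (x : ℂ) ^ 2) ^ 2‖ = q ^ 2 := by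
      rw [norm_pow, hq]
    have h12 : ‖4 * A * B * (x : ℂ) ^ 2‖
        = 4 * (‖A‖ * ‖B‖) * t := by
      rw [norm_mul, norm_mul, norm_mul, habsx2]
      simp [mul_assoc]
    rw [h11, h12] at h8
    linarith
  have hq0 : 0 ≤ q := by rw [hq]; exact norm_nonneg _
  have ha0 : 0 ≤ ‖A‖ * ‖B‖ :=
    mul_nonneg (norm_nonneg _) (norm_nonneg _)
  have hfinal : 1 / (2 * α ^ 2) * L ^ 2 = c2 ^ 2 / 2 * L ^ 2 := by
    rw [hc2def]
    field_simp
  rw [hfinal]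
  exact lop_final_arith c1 c2 r L t (‖A‖ * ‖B‖) q
    (‖lopDet α β l x‖) hL0 ht0 htr hr0 hr1 hr2 hc1 hc2 ha0 hAB hlow hq0 hmain
end

section
/- Let N ≥ 2, 0 < ε < π/2, and let α, β ∈ ℝ satisfy α > 0 and α + β > 0. Then there exists a constant C > 0, depending only on ε, α, β, such that for every λ ∈ Σ_ε and every ξ' ∈ ℝ^{N−1}: |4AB − 3B² − |ξ'|²| ≤ C|λ|. -/
namespace M1Aux

open Complex

lemma halfsq {w : ℂ} (hw : w ≠ 0) : w ^ (1/2 : ℂ) * w ^ (1/2 : ℂ) = w := by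
  rw [← Complex.cpow_add _ _ hw]
  norm_num

lemma abs_half {w : ℂ} (hw : w ≠ 0) :
    ‖w ^ (1/2 : ℂ)‖ = Real.sqrt (‖w‖) := by
  rw [Complex.norm_cpow_of_ne_zero hw]
  norm_num [Real.sqrt_eq_rpow]

lemma sector_add {c : ℝ} (hc0 : 0 ≤ c) (hc1 : c < 1) {z : ℂ} {t : ℝ} (ht : 0 ≤ t)
    (hz : -c * ‖z‖ ≤ z.re) :
    Real.sqrt ((1 - c)/2) * (‖z‖ + t) ≤ ‖z + (t : ℂ)‖ := by
  have h0 : (0:ℝ) ≤ ‖z‖ := norm_nonneg z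
  have h1 : ‖z + (t:ℂ)‖ ^ 2
      = ‖z‖ ^ 2 + 2*t*z.re + t^2 := by
    rw [Complex.sq_norm, Complex.sq_norm, Complex.normSq_apply, Complex.normSq_apply]
    simp only [Complex.add_re, Complex.add_im, Complex.ofReal_re, Complex.ofReal_im]
    ring
  have habs : |z.re| ≤ ‖z‖ := Complex.abs_re_le_norm z
  have hre := (abs_le.mp habs).1
  have key : ((1 - c)/2) * (‖z‖ + t)^2 ≤ ‖z + (t:ℂ)‖ ^ 2 := by
    rw [h1]
    nlinarith [sq_nonneg (‖z‖ - t),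
      mul_le_mul_of_nonneg_left hz (by linarith : (0:ℝ) ≤ 2*t)]
  calc Real.sqrt ((1 - c)/2) * (‖z‖ + t)
      = Real.sqrt (((1 - c)/2) * (‖z‖ + t)^2) := by
        rw [Real.sqrt_mul (by linarith), Real.sqrt_sq (by positivity)]
    _ ≤ Real.sqrt (‖z + (t:ℂ)‖ ^ 2) := Real.sqrt_le_sqrt key
    _ = ‖z + (t:ℂ)‖ := Real.sqrt_sq (norm_nonneg _)

lemma sector_shift {c : ℝ} (hc0 : 0 ≤ c) (hc1 : c ≤ 1) {z : ℂ} {t : ℝ} (ht : 0 ≤ t)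
    (hz : -c * ‖z‖ ≤ z.re) :
    -c * ‖z + (t : ℂ)‖ ≤ (z + (t : ℂ)).re := by
  have h1 : ‖z‖ ≤ ‖z + (t:ℂ)‖ + t := by
    calc ‖z‖ = ‖(z + (t:ℂ)) + (-(t:ℂ))‖ := by ring_nf
      _ ≤ ‖z + (t:ℂ)‖ + ‖-(t:ℂ)‖ := norm_add_le _ _
      _ = ‖z + (t:ℂ)‖ + t := by
          rw [norm_neg, Complex.norm_real, Real.norm_eq_abs, _root_.abs_of_nonneg ht]
  have h2 : (z + (t:ℂ)).re = z.re + t := by simp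
  nlinarith [mul_le_mul_of_nonneg_left h1 hc0, mul_le_of_le_one_left ht hc1]

lemma arg_le {ε : ℝ} (hε1 : ε < Real.pi) {w : ℂ} (hw : w ≠ 0)
    (h : -Real.cos ε * ‖w‖ ≤ w.re) : |Complex.arg w| ≤ Real.pi - ε := by
  by_contra hcon
  push_neg at hcon
  have h1 : Real.cos |Complex.arg w| < Real.cos (Real.pi - ε) :=
    Real.cos_lt_cos_of_nonneg_of_le_pi (by linarith) (Complex.abs_arg_le_pi w) hcon
  rw [Real.cos_abs, Real.cos_pi_sub, Complex.cos_arg hw] at h1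
  have h3 : 0 < ‖w‖ := norm_pos_iff.mpr hw
  have := (div_lt_iff₀ h3).mp h1
  nlinarith

lemma re_ge {ε : ℝ} (hε0 : 0 ≤ ε) {w : ℂ}
    (h : |Complex.arg w| ≤ Real.pi - ε) : -Real.cos ε * ‖w‖ ≤ w.re := by
  rcases eq_or_ne w 0 with rfl | hw
  · simp
  have h1 : Real.cos (Real.pi - ε) ≤ Real.cos |Complex.arg w| :=
    Real.cos_le_cos_of_nonneg_of_le_pi (abs_nonneg _) (by linarith [abs_nonneg (Complex.arg w)]) h
  rw [Real.cos_abs, Real.cos_pi_sub, Complex.cos_arg hw] at h1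
  have h3 : 0 < ‖w‖ := norm_pos_iff.mpr hw
  have := (le_div_iff₀ h3).mp h1
  nlinarith

lemma prod_re {ε : ℝ} (hε0 : 0 ≤ ε) {u v : ℂ} (hu : u ≠ 0) (hv : v ≠ 0)
    (hau : |Complex.arg u| ≤ Real.pi - ε) (hav : |Complex.arg v| ≤ Real.pi - ε) :
    -Real.cos ε * ‖u ^ (1/2:ℂ) * v ^ (1/2:ℂ)‖
      ≤ (u ^ (1/2:ℂ) * v ^ (1/2:ℂ)).re := by
  rw [Complex.cpow_def_of_ne_zero hu, Complex.cpow_def_of_ne_zero hv, ← Complex.exp_add]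
  set z := Complex.log u * (1/2) + Complex.log v * (1/2) with hz
  have him : z.im = (Complex.arg u + Complex.arg v) / 2 := by
    simp only [hz, Complex.add_im, Complex.mul_im, Complex.log_im, Complex.log_re]
    norm_num
    ring
  have h1 : |z.im| ≤ Real.pi - ε := by
    rw [him]
    have habs2 : |(Complex.arg u + Complex.arg v) / 2| = |Complex.arg u + Complex.arg v| / 2 := by
      rw [abs_div]
      norm_num
    rw [habs2]
    have := abs_add_le (Complex.arg u) (Complex.arg v)
    linarith
  have h2 : Real.cos (Real.pi - ε) ≤ Real.cos z.im := by
    rw [← Real.cos_abs z.im]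
    exact Real.cos_le_cos_of_nonneg_of_le_pi (abs_nonneg _)
      (by linarith [abs_nonneg z.im]) h1
  rw [Real.cos_pi_sub] at h2
  rw [Complex.norm_exp, Complex.exp_re]
  nlinarith [Real.exp_pos z.re]

/-- Core estimate, with `x` an arbitrary real number. -/
lemma main_est {ε α β : ℝ} (hε0 : 0 < ε) (hε1 : ε < Real.pi / 2) (hα : 0 < α)
    (hαβ : 0 < α + β) (l : ℂ) (hl : l ≠ 0) (harg : |Complex.arg l| ≤ Real.pi - ε) (x : ℝ) :
    ‖4 * lameA α β l x * lameB α l x - 3 * lameB α l x ^ 2 - (x : ℂ) ^ 2‖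
      ≤ (4 * (Real.sqrt ((α+β)⁻¹ * α⁻¹) / Real.sqrt ((1 - Real.cos ε)/2) ^ 2
          + ((α+β)⁻¹ + α⁻¹) / Real.sqrt ((1 - Real.cos ε)/2)) + 3 * α⁻¹) * ‖l‖ := by
  have hπ := Real.pi_pos
  have hεπ : ε < Real.pi := by linarith
  obtain ⟨a, ha⟩ : ∃ y : ℝ, y = (α + β)⁻¹ := ⟨_, rfl⟩
  obtain ⟨b, hb⟩ : ∃ y : ℝ, y = α⁻¹ := ⟨_, rfl⟩
  obtain ⟨c, hc⟩ : ∃ y : ℝ, y = Real.cos ε := ⟨_, rfl⟩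
  obtain ⟨s, hs⟩ : ∃ y : ℝ, y = Real.sqrt ((1 - c)/2) := ⟨_, rfl⟩
  obtain ⟨t, htd⟩ : ∃ y : ℝ, y = x ^ 2 := ⟨_, rfl⟩
  have ha0 : 0 < a := ha ▸ inv_pos.mpr hαβ
  have hb0 : 0 < b := hb ▸ inv_pos.mpr hα
  have hc0 : 0 ≤ c := hc ▸ Real.cos_nonneg_of_mem_Icc ⟨by linarith, le_of_lt hε1⟩
  have hc1 : c < 1 := by
    have := Real.cos_lt_cos_of_nonneg_of_le_pi (le_refl 0) (le_of_lt hεπ) hε0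
    rw [Real.cos_zero] at this
    rw [hc]; exact this
  have hs0 : 0 < s := hs ▸ Real.sqrt_pos.mpr (by linarith)
  have ht : 0 ≤ t := htd ▸ sq_nonneg x
  have habsl : 0 < ‖l‖ := norm_pos_iff.mpr hl
  rw [show ((α+β)⁻¹ * α⁻¹ : ℝ) = a * b by rw [ha, hb],
    show Real.sqrt ((1 - Real.cos ε)/2) = s by rw [hs, hc],
    show ((α+β)⁻¹ + α⁻¹ : ℝ) = a + b by rw [ha, hb],
    show (α⁻¹ : ℝ) = b from hb.symm]
  obtain ⟨wA, hwA⟩ : ∃ w : ℂ, w = ((a:ℝ):ℂ) * l + ((t:ℝ):ℂ) := ⟨_, rfl⟩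
  obtain ⟨wB, hwB⟩ : ∃ w : ℂ, w = ((b:ℝ):ℂ) * l + ((t:ℝ):ℂ) := ⟨_, rfl⟩
  have hAeq : lameA α β l x = wA ^ (1/2:ℂ) := by
    rw [lameA, hwA]
    congr 1
    rw [ha, htd]
    push_cast
    ring
  have hBeq : lameB α l x = wB ^ (1/2:ℂ) := by
    rw [lameB, hwB]
    congr 1
    rw [hb, htd]
    push_cast
    ring
  -- sector property of l
  have hPl : -c * ‖l‖ ≤ l.re := hc ▸ M1Aux.re_ge (le_of_lt hε0) harg
  have habs_al : ‖((a:ℝ):ℂ) * l‖ = a * ‖l‖ := by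
    rw [norm_mul, Complex.norm_real, Real.norm_eq_abs, _root_.abs_of_pos ha0]
  have habs_bl : ‖((b:ℝ):ℂ) * l‖ = b * ‖l‖ := by
    rw [norm_mul, Complex.norm_real, Real.norm_eq_abs, _root_.abs_of_pos hb0]
  have hPal : -c * ‖((a:ℝ):ℂ) * l‖ ≤ (((a:ℝ):ℂ) * l).re := by
    rw [habs_al]
    have h' : (((a:ℝ):ℂ) * l).re = a * l.re := by simp [Complex.mul_re]
    rw [h']
    nlinarith
  have hPbl : -c * ‖((b:ℝ):ℂ) * l‖ ≤ (((b:ℝ):ℂ) * l).re := by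
    rw [habs_bl]
    have h' : (((b:ℝ):ℂ) * l).re = b * l.re := by simp [Complex.mul_re]
    rw [h']
    nlinarith
  have hlowA : s * (a * ‖l‖ + t) ≤ ‖wA‖ := by
    have h' := M1Aux.sector_add hc0 hc1 ht hPal
    rw [habs_al] at h'
    rw [hwA, hs]
    exact h'
  have hlowB : s * (b * ‖l‖ + t) ≤ ‖wB‖ := by
    have h' := M1Aux.sector_add hc0 hc1 ht hPbl
    rw [habs_bl] at h'
    rw [hwB, hs]
    exact h'
  have hposA : 0 < s * (a * ‖l‖ + t) := mul_pos hs0 (by nlinarith)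
  have hposB : 0 < s * (b * ‖l‖ + t) := mul_pos hs0 (by nlinarith)
  have hwA0 : wA ≠ 0 := by
    intro h
    rw [h, norm_zero] at hlowA
    linarith
  have hwB0 : wB ≠ 0 := by
    intro h
    rw [h, norm_zero] at hlowB
    linarith
  have hPwA : -c * ‖wA‖ ≤ wA.re := by
    rw [hwA]; exact M1Aux.sector_shift hc0 (le_of_lt hc1) ht hPal
  have hPwB : -c * ‖wB‖ ≤ wB.re := by
    rw [hwB]; exact M1Aux.sector_shift hc0 (le_of_lt hc1) ht hPbl
  have hargA : |Complex.arg wA| ≤ Real.pi - ε := M1Aux.arg_le hεπ hwA0 (hc ▸ hPwA)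
  have hargB : |Complex.arg wB| ≤ Real.pi - ε := M1Aux.arg_le hεπ hwB0 (hc ▸ hPwB)
  obtain ⟨A, hA⟩ : ∃ w : ℂ, w = wA ^ (1/2:ℂ) := ⟨_, rfl⟩
  obtain ⟨B, hB⟩ : ∃ w : ℂ, w = wB ^ (1/2:ℂ) := ⟨_, rfl⟩
  have hA2 : A * A = wA := by rw [hA]; exact M1Aux.halfsq hwA0
  have hB2 : B * B = wB := by rw [hB]; exact M1Aux.halfsq hwB0
  have habsA : ‖A‖ = Real.sqrt (‖wA‖) := by
    rw [hA]; exact M1Aux.abs_half hwA0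
  have habsB : ‖B‖ = Real.sqrt (‖wB‖) := by
    rw [hB]; exact M1Aux.abs_half hwB0
  -- lower bound for |A*B|
  have hABlow : s * Real.sqrt (a*b) * ‖l‖ ≤ ‖A * B‖ := by
    have e1 : s * (a * ‖l‖) ≤ ‖wA‖ :=
      le_trans (mul_le_mul_of_nonneg_left (le_add_of_nonneg_right ht) hs0.le) hlowA
    have e2 : s * (b * ‖l‖) ≤ ‖wB‖ :=
      le_trans (mul_le_mul_of_nonneg_left (le_add_of_nonneg_right ht) hs0.le) hlowB
    have e3 : (s * (a * ‖l‖)) * (s * (b * ‖l‖))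
        ≤ ‖wA‖ * ‖wB‖ :=
      mul_le_mul e1 e2 (by positivity) (norm_nonneg wA)
    have hsab : Real.sqrt (a*b) ^ 2 = a * b := Real.sq_sqrt (by positivity)
    have h1 : (s * Real.sqrt (a*b) * ‖l‖)^2 ≤ ‖A*B‖^2 := by
      rw [norm_mul]
      have e0 : (‖A‖ * ‖B‖)^2 = ‖wA‖ * ‖wB‖ := by
        rw [habsA, habsB, mul_pow, Real.sq_sqrt (norm_nonneg wA),
          Real.sq_sqrt (norm_nonneg wB)]
      have q : (s * Real.sqrt (a*b) * ‖l‖)^2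
          = (s * (a * ‖l‖)) * (s * (b * ‖l‖)) := by
        linear_combination (s^2 * ‖l‖^2) * hsab
      rw [e0, q]
      exact e3
    calc s * Real.sqrt (a*b) * ‖l‖
        = Real.sqrt ((s * Real.sqrt (a*b) * ‖l‖)^2) :=
          (Real.sqrt_sq (by positivity)).symm
      _ ≤ Real.sqrt (‖A*B‖^2) := Real.sqrt_le_sqrt h1
      _ = ‖A*B‖ := Real.sqrt_sq (norm_nonneg _)
  -- sector property of A*B and denominator bound
  have hPAB : -c * ‖A * B‖ ≤ (A * B).re := by
    rw [hA, hB]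
    exact hc ▸ M1Aux.prod_re (ε := ε) (le_of_lt hε0) hwA0 hwB0 hargA hargB
  have hD : s * (‖A*B‖ + t) ≤ ‖A*B + (t:ℂ)‖ := by
    rw [hs]; exact M1Aux.sector_add hc0 hc1 ht hPAB
  obtain ⟨D, hDdef⟩ : ∃ y : ℝ, y = ‖A*B + (t:ℂ)‖ := ⟨_, rfl⟩
  rw [← hDdef] at hD
  have hD1 : s^2 * Real.sqrt (a*b) * ‖l‖ ≤ D := by
    calc s^2 * Real.sqrt (a*b) * ‖l‖
        = s * (s * Real.sqrt (a*b) * ‖l‖) := by ring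
      _ ≤ s * ‖A*B‖ := mul_le_mul_of_nonneg_left hABlow hs0.le
      _ ≤ s * (‖A*B‖ + t) :=
          mul_le_mul_of_nonneg_left (le_add_of_nonneg_right ht) hs0.le
      _ ≤ D := hD
  have hD2 : s * t ≤ D := by
    calc s * t ≤ s * (‖A*B‖ + t) :=
          mul_le_mul_of_nonneg_left (le_add_of_nonneg_left (norm_nonneg _)) hs0.le
      _ ≤ D := hD
  have hD0 : 0 < D :=
    lt_of_lt_of_le
      (mul_pos (mul_pos (pow_pos hs0 2) (Real.sqrt_pos.mpr (mul_pos ha0 hb0))) habsl) hD1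
  -- key identity
  have hkey : (A*B - (t:ℂ)) * (A*B + (t:ℂ))
      = ((a:ℝ):ℂ) * ((b:ℝ):ℂ) * l^2 + (((a:ℝ):ℂ) + ((b:ℝ):ℂ)) * l * ((t:ℝ):ℂ) := by
    have h0 : (A*B - (t:ℂ)) * (A*B + (t:ℂ)) = (A*A) * (B*B) - ((t:ℝ):ℂ)^2 := by ring
    rw [h0, hA2, hB2, hwA, hwB]
    ring
  -- numerator bound
  have hnum : ‖A*B - (t:ℂ)‖ * D
      ≤ a*b*(‖l‖)^2 + (a+b)*(‖l‖)*t := by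
    rw [hDdef, ← norm_mul, hkey]
    calc ‖((a:ℝ):ℂ) * ((b:ℝ):ℂ) * l^2 + (((a:ℝ):ℂ) + ((b:ℝ):ℂ)) * l * ((t:ℝ):ℂ)‖
        ≤ ‖((a:ℝ):ℂ) * ((b:ℝ):ℂ) * l^2‖
          + ‖(((a:ℝ):ℂ) + ((b:ℝ):ℂ)) * l * ((t:ℝ):ℂ)‖ := norm_add_le _ _
      _ = a*b*(‖l‖)^2 + (a+b)*(‖l‖)*t := by
          have u1 : ‖((a:ℝ):ℂ) * ((b:ℝ):ℂ) * l^2‖ = a*b*(‖l‖)^2 := by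
            rw [norm_mul, norm_mul, norm_pow, Complex.norm_real, Real.norm_eq_abs, Complex.norm_real, Real.norm_eq_abs,
              _root_.abs_of_pos ha0, _root_.abs_of_pos hb0]
          have u2 : ‖(((a:ℝ):ℂ) + ((b:ℝ):ℂ)) * l * ((t:ℝ):ℂ)‖
              = (a+b)*(‖l‖)*t := by
            rw [norm_mul, norm_mul, ← Complex.ofReal_add, Complex.norm_real, Real.norm_eq_abs, Complex.norm_real, Real.norm_eq_abs,
              _root_.abs_of_pos (by linarith : (0:ℝ) < a + b), _root_.abs_of_nonneg ht]
          rw [u1, u2]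
  -- main bound on |AB - t|
  have hmain : ‖A*B - (t:ℂ)‖
      ≤ (Real.sqrt (a*b)/s^2 + (a+b)/s) * ‖l‖ := by
    rw [← mul_le_mul_iff_of_pos_right hD0]
    have e1 : (Real.sqrt (a*b)/s^2) * ‖l‖ * (s^2 * Real.sqrt (a*b) * ‖l‖)
        ≤ (Real.sqrt (a*b)/s^2) * ‖l‖ * D :=
      mul_le_mul_of_nonneg_left hD1 (by positivity)
    have e2 : ((a+b)/s) * ‖l‖ * (s * t) ≤ ((a+b)/s) * ‖l‖ * D :=
      mul_le_mul_of_nonneg_left hD2 (by positivity)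
    have hsab : Real.sqrt (a*b) * Real.sqrt (a*b) = a * b :=
      Real.mul_self_sqrt (by positivity)
    have q1 : (Real.sqrt (a*b)/s^2) * ‖l‖ * (s^2 * Real.sqrt (a*b) * ‖l‖)
        = a*b*(‖l‖)^2 := by
      have hrw : (Real.sqrt (a*b)/s^2) * ‖l‖ * (s^2 * Real.sqrt (a*b) * ‖l‖)
          = (s^2/s^2) * ((Real.sqrt (a*b) * Real.sqrt (a*b)) * (‖l‖ * ‖l‖)) := by
        ring
      rw [hrw, div_self (by positivity : (s:ℝ)^2 ≠ 0), hsab]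
      ring
    have q2 : ((a+b)/s) * ‖l‖ * (s * t) = (a+b)*(‖l‖)*t := by
      have hrw : ((a+b)/s) * ‖l‖ * (s * t)
          = (s/s) * ((a+b) * ‖l‖ * t) := by ring
      rw [hrw, div_self hs0.ne']
      ring
    have e1' : a*b*(‖l‖)^2 ≤ (Real.sqrt (a*b)/s^2) * ‖l‖ * D := by
      rw [← q1]; exact e1
    have e2' : (a+b)*(‖l‖)*t ≤ ((a+b)/s) * ‖l‖ * D := by
      rw [← q2]; exact e2
    calc ‖A*B - (t:ℂ)‖ * D
        ≤ a*b*(‖l‖)^2 + (a+b)*(‖l‖)*t := hnum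
      _ ≤ (Real.sqrt (a*b)/s^2) * ‖l‖ * D + ((a+b)/s) * ‖l‖ * D := by
          linarith
      _ = (Real.sqrt (a*b)/s^2 + (a+b)/s) * ‖l‖ * D := by ring
  -- final assembly
  have hexpr : 4 * lameA α β l x * lameB α l x - 3 * lameB α l x ^ 2 - ((x:ℝ):ℂ)^2
      = 4 * (A*B - (t:ℂ)) - 3 * (((b:ℝ):ℂ) * l) := by
    rw [hAeq, hBeq, ← hA, ← hB]
    have hB2' : B ^ 2 = ((b:ℝ):ℂ) * l + ((t:ℝ):ℂ) := by rw [sq, hB2, hwB]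
    have hx2 : ((x:ℝ):ℂ)^2 = ((t:ℝ):ℂ) := by rw [htd]; push_cast; ring
    rw [hB2', hx2]
    ring
  calc ‖4 * lameA α β l x * lameB α l x - 3 * lameB α l x ^ 2 - ((x:ℝ):ℂ)^2‖
      = ‖4 * (A*B - (t:ℂ)) - 3 * (((b:ℝ):ℂ) * l)‖ := by rw [hexpr]
    _ ≤ ‖4 * (A*B - (t:ℂ))‖ + ‖3 * (((b:ℝ):ℂ) * l)‖ :=
        norm_sub_le _ _
    _ = 4 * ‖A*B - (t:ℂ)‖ + 3 * (b * ‖l‖) := by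
        rw [norm_mul, norm_mul, habs_bl]
        norm_num
    _ ≤ 4 * ((Real.sqrt (a*b)/s^2 + (a+b)/s) * ‖l‖) + 3 * (b * ‖l‖) := by
        linarith [hmain]
    _ = (4 * (Real.sqrt (a*b)/s^2 + (a+b)/s) + 3*b) * ‖l‖ := by ring

end M1Aux

/-- the symbol `m₁ = −3B² − |ξ'|² + 4AB` is `O(|λ|)` on the sector. -/
theorem symbol_m1_bound
    (N : ℕ) (hN : 2 ≤ N) (ε α β : ℝ)
    (hε0 : 0 < ε) (hε1 : ε < Real.pi / 2) (hα : 0 < α) (hαβ : 0 < α + β) :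
    ∃ C : ℝ, 0 < C ∧
      ∀ l : ℂ, l ≠ 0 → |Complex.arg l| ≤ Real.pi - ε →
        ∀ ξ' : EuclideanSpace ℝ (Fin (N - 1)),
          ‖4 * lameA α β l ‖ξ'‖ * lameB α l ‖ξ'‖ -
              3 * lameB α l ‖ξ'‖ ^ 2 - (‖ξ'‖ : ℂ) ^ 2‖ ≤ C * ‖l‖ := by
  have hπ := Real.pi_pos
  have hεπ : ε < Real.pi := by linarith
  have hc1 : Real.cos ε < 1 := by
    have := Real.cos_lt_cos_of_nonneg_of_le_pi (le_refl 0) (le_of_lt hεπ) hε0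
    rwa [Real.cos_zero] at this
  have hs0 : 0 < Real.sqrt ((1 - Real.cos ε)/2) := Real.sqrt_pos.mpr (by linarith)
  have ha0 : 0 < (α+β)⁻¹ := inv_pos.mpr hαβ
  have hb0 : 0 < (α:ℝ)⁻¹ := inv_pos.mpr hα
  refine ⟨4 * (Real.sqrt ((α+β)⁻¹ * α⁻¹) / Real.sqrt ((1 - Real.cos ε)/2) ^ 2
          + ((α+β)⁻¹ + α⁻¹) / Real.sqrt ((1 - Real.cos ε)/2)) + 3 * α⁻¹,
    by positivity, ?_⟩
  intro l hl harg ξ'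
  exact M1Aux.main_est hε0 hε1 hα hαβ l hl harg ‖ξ'‖
end

section
/- Let N ≥ 2, 0 < ε < π/2, and let α, β ∈ ℝ satisfy α > 0 and α + β > 0. Then there exists a constant C > 0, depending only on ε, α, β, such that for every λ ∈ Σ_ε and every ξ' ∈ ℝ^{N−1}: |2AB − B² − |ξ'|²| ≤ C|λ|. -/
/-- On the sector, if `Re z < 0` then `|Im z| ≥ sin ε · |z|`. -/
lemma sector_im_lb (ε : ℝ) (hε0 : 0 < ε) (hε1 : ε < Real.pi / 2)
    (z : ℂ) (harg : |z.arg| ≤ Real.pi - ε) (hre : z.re < 0) :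
    Real.sin ε * norm z ≤ |z.im| := by
  have hπ : (0:ℝ) < Real.pi := Real.pi_pos
  have h2 : Real.pi / 2 < |z.arg| := by
    by_contra h
    exact absurd (Complex.abs_arg_le_pi_div_two_iff.mp (not_lt.mp h)) (not_le.mpr hre)
  have hsin : Real.sin ε ≤ Real.sin |z.arg| := by
    conv_rhs => rw [← Real.sin_pi_sub]
    exact Real.sin_le_sin_of_le_of_le_pi_div_two (x := ε) (y := Real.pi - |z.arg|)
      (by linarith) (by linarith) (by linarith)
  have habs : |z.im| = norm z * Real.sin |z.arg| := by
    have h := Complex.norm_mul_sin_arg z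
    rcases le_or_gt 0 z.arg with h0 | h0
    · rw [abs_of_nonneg h0, ← h, abs_of_nonneg]
      exact mul_nonneg (norm_nonneg z)
        (Real.sin_nonneg_of_nonneg_of_le_pi h0 (Complex.arg_le_pi z))
    · have hsz : Real.sin z.arg ≤ 0 :=
        Real.sin_nonpos_of_nonpos_of_neg_pi_le h0.le (by linarith [Complex.neg_pi_lt_arg z])
      have hle : z.im ≤ 0 := by
        rw [← h]; exact mul_nonpos_of_nonneg_of_nonpos (norm_nonneg z) hsz
      rw [abs_of_nonpos hle, abs_of_neg h0, Real.sin_neg, mul_neg, h]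
  rw [habs]
  nlinarith [norm_nonneg z]

/-- Adding a nonnegative real to a sector point does not shrink the modulus too much. -/
lemma sector_abs_add (ε : ℝ) (hε0 : 0 < ε) (hε1 : ε < Real.pi / 2)
    (z : ℂ) (harg : |z.arg| ≤ Real.pi - ε) (t : ℝ) (ht : 0 ≤ t) :
    Real.sin ε * norm z ≤ norm (z + (t : ℂ)) := by
  have hs1 : Real.sin ε ≤ 1 := Real.sin_le_one ε
  have hs0 : 0 < Real.sin ε := Real.sin_pos_of_pos_of_lt_pi hε0 (by linarith [Real.pi_pos])
  rcases le_or_gt 0 z.re with hre | hre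
  · have h1 : norm z ≤ norm (z + (t : ℂ)) := by
      rw [Complex.norm_def, Complex.norm_def]
      apply Real.sqrt_le_sqrt
      simp only [Complex.normSq_apply, Complex.add_re, Complex.add_im, Complex.ofReal_re,
        Complex.ofReal_im, add_zero]
      nlinarith
    nlinarith [norm_nonneg z]
  · have h1 := sector_im_lb ε hε0 hε1 z harg hre
    have h2 : |(z + (t : ℂ)).im| ≤ norm (z + (t : ℂ)) := Complex.abs_im_le_norm _
    have h3 : (z + (t : ℂ)).im = z.im := by simp
    rw [h3] at h2
    linarith

/-- `|w| + Re w ≥ (sin ε)²/8 · |w|` for `w = z + t`. -/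
lemma sector_abs_add_re (ε : ℝ) (hε0 : 0 < ε) (hε1 : ε < Real.pi / 2)
    (z : ℂ) (hz : z ≠ 0) (harg : |z.arg| ≤ Real.pi - ε) (t : ℝ) (ht : 0 ≤ t) :
    Real.sin ε ^ 2 / 8 * norm (z + (t : ℂ)) ≤
      norm (z + (t : ℂ)) + (z + (t : ℂ)).re := by
  set w := z + (t : ℂ) with hw
  have hs1 : Real.sin ε ≤ 1 := Real.sin_le_one ε
  have hs0 : 0 < Real.sin ε := Real.sin_pos_of_pos_of_lt_pi hε0 (by linarith [Real.pi_pos])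
  have hwre : w.re = z.re + t := by simp [hw]
  have hwim : w.im = z.im := by simp [hw]
  have hrele : w.re ≤ norm w := Complex.re_le_norm w
  have hnegle : -norm w ≤ w.re := (abs_le.1 (Complex.abs_re_le_norm w)).1
  have hsq1 : Real.sin ε ^ 2 ≤ 1 := by nlinarith
  rcases le_or_gt 0 w.re with hre | hre
  · nlinarith [norm_nonneg w]
  · -- Re z < 0, t < -z.re ≤ |z|
    have hzre : z.re < 0 := by linarith [hwre ▸ hre, ht]
    have hzrele : -z.re ≤ norm z := by
      have := Complex.abs_re_le_norm z
      rw [abs_of_neg hzre] at this; linarith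
    have htlt : t < -z.re := by rw [hwre] at hre; linarith
    have habsw : norm w ≤ 2 * norm z := by
      calc norm w ≤ norm z + norm ((t : ℂ)) := norm_add_le z _
        _ ≤ 2 * norm z := by
            rw [Complex.norm_real, Real.norm_eq_abs, abs_of_nonneg ht]; linarith
    have him := sector_im_lb ε hε0 hε1 z harg hzre
    have hsq : (norm w + w.re) * (norm w - w.re) = z.im ^ 2 := by
      have := Complex.sq_norm w
      rw [Complex.normSq_apply] at this
      rw [← hwim]; ring_nf; nlinarith [this]
    have hz0 : 0 < norm z := norm_pos_iff.mpr hz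
    have hsum : 0 ≤ norm w + w.re := by linarith
    have hdiff : norm w - w.re ≤ 4 * norm z := by linarith
    have hdiffpos : 0 < norm w - w.re := by
      have : 0 ≤ norm w := norm_nonneg w
      linarith
    have him2 : (Real.sin ε * norm z) ^ 2 ≤ z.im ^ 2 := by
      calc (Real.sin ε * norm z) ^ 2 ≤ |z.im| ^ 2 :=
            pow_le_pow_left₀ (by positivity) him 2
        _ = z.im ^ 2 := sq_abs _
    nlinarith [mul_le_mul_of_nonneg_left hdiff hsum, him2,
      mul_le_mul_of_nonneg_left habsw
        (by positivity : (0:ℝ) ≤ Real.sin ε ^ 2 * norm z)]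

/-- The real part of the principal square root on a shifted sector. -/
lemma sector_sqrt_re (ε : ℝ) (hε0 : 0 < ε) (hε1 : ε < Real.pi / 2)
    (z : ℂ) (hz : z ≠ 0) (harg : |z.arg| ≤ Real.pi - ε) (t : ℝ) (ht : 0 ≤ t) :
    Real.sin ε / 4 * norm ((z + (t : ℂ)) ^ (2⁻¹ : ℂ)) ≤
      ((z + (t : ℂ)) ^ (2⁻¹ : ℂ)).re := by
  set w := z + (t : ℂ) with hw
  set s := w ^ (2⁻¹ : ℂ) with hs
  have hs0 : 0 < Real.sin ε := Real.sin_pos_of_pos_of_lt_pi hε0 (by linarith [Real.pi_pos])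
  have hsq : s ^ 2 = w := by
    rw [hs]
    exact_mod_cast Complex.cpow_ofNat_inv_pow w 2
  have habs : norm s ^ 2 = norm w := by
    rw [← norm_pow, hsq]
  have habs' : norm s = Real.sqrt (norm w) := by
    rw [← habs, Real.sqrt_sq (norm_nonneg s)]
  have hre : s.re = Real.sqrt ((norm w + w.re) / 2) := Complex.cpow_inv_two_re w
  have hkey := sector_abs_add_re ε hε0 hε1 z hz harg t ht
  rw [← hw] at hkey
  have h1 : Real.sin ε ^ 2 / 16 * norm w ≤ (norm w + w.re) / 2 := by linarith
  have h2 : Real.sqrt (Real.sin ε ^ 2 / 16 * norm w) ≤ s.re := by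
    rw [hre]; exact Real.sqrt_le_sqrt h1
  have h3 : Real.sqrt (Real.sin ε ^ 2 / 16 * norm w)
      = Real.sin ε / 4 * Real.sqrt (norm w) := by
    rw [Real.sqrt_mul (by positivity)]
    congr 1
    rw [show Real.sin ε ^ 2 / 16 = (Real.sin ε / 4) ^ 2 by ring,
      Real.sqrt_sq (by positivity)]
  rw [habs']
  linarith [h3 ▸ h2]

/-- the symbol `m₂ = 2AB − B² − |ξ'|²` is `O(|λ|)` on the sector. -/
theorem symbol_m2_bound
    (N : ℕ) (hN : 2 ≤ N) (ε α β : ℝ)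
    (hε0 : 0 < ε) (hε1 : ε < Real.pi / 2) (hα : 0 < α) (hαβ : 0 < α + β) :
    ∃ C : ℝ, 0 < C ∧
      ∀ l : ℂ, l ≠ 0 → |Complex.arg l| ≤ Real.pi - ε →
        ∀ ξ' : EuclideanSpace ℝ (Fin (N - 1)),
          norm (2 * lameA α β l ‖ξ'‖ * lameB α l ‖ξ'‖ -
              lameB α l ‖ξ'‖ ^ 2 - (‖ξ'‖ : ℂ) ^ 2) ≤ C * norm l := by
  have hs0 : 0 < Real.sin ε := Real.sin_pos_of_pos_of_lt_pi hε0 (by linarith [Real.pi_pos])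
  set a : ℝ := (α + β)⁻¹ with ha
  set b : ℝ := α⁻¹ with hb
  have ha0 : 0 < a := by positivity
  have hb0 : 0 < b := by positivity
  set K : ℝ := Real.sin ε ^ 3 * b / 16 with hK
  have hK0 : 0 < K := by positivity
  refine ⟨a + (a - b) ^ 2 / K, by positivity, ?_⟩
  intro l hl harg ξ'
  set x : ℝ := ‖ξ'‖ with hx
  have hx0 : 0 ≤ x := norm_nonneg _
  have hl0 : 0 < norm l := norm_pos_iff.mpr hl
  -- the two sector points
  set zA : ℂ := ((a : ℝ) : ℂ) * l with hzA
  set zB : ℂ := ((b : ℝ) : ℂ) * l with hzB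
  have hzAne : zA ≠ 0 := by
    simp [hzA, hl, Complex.ofReal_ne_zero, ha0.ne']
  have hzBne : zB ≠ 0 := by
    simp [hzB, hl, Complex.ofReal_ne_zero, hb0.ne']
  have hargA : |zA.arg| ≤ Real.pi - ε := by
    rw [hzA, Complex.arg_real_mul l ha0]; exact harg
  have hargB : |zB.arg| ≤ Real.pi - ε := by
    rw [hzB, Complex.arg_real_mul l hb0]; exact harg
  have habsA : norm zA = a * norm l := by
    simp [hzA, abs_of_pos ha0]
  have habsB : norm zB = b * norm l := by
    simp [hzB, abs_of_pos hb0]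
  -- rewrite lameA / lameB
  have hcast : ((x ^ 2 : ℝ) : ℂ) = (x : ℂ) ^ 2 := by push_cast; ring
  have hAeq : lameA α β l x = (zA + ((x ^ 2 : ℝ) : ℂ)) ^ (2⁻¹ : ℂ) := by
    rw [lameA, hcast, one_div, hzA]
    norm_num [ha]
  have hBeq : lameB α l x = (zB + ((x ^ 2 : ℝ) : ℂ)) ^ (2⁻¹ : ℂ) := by
    rw [lameB, hcast, one_div, hzB]
    norm_num [hb]
  set A : ℂ := lameA α β l x with hA
  set B : ℂ := lameB α l x with hB
  have ht : (0 : ℝ) ≤ x ^ 2 := by positivity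
  have hA2 : A ^ 2 = zA + (x : ℂ) ^ 2 := by
    rw [hAeq, ← hcast]
    exact_mod_cast Complex.cpow_ofNat_inv_pow _ 2
  have hB2 : B ^ 2 = zB + (x : ℂ) ^ 2 := by
    rw [hBeq, ← hcast]
    exact_mod_cast Complex.cpow_ofNat_inv_pow _ 2
  have hAre : Real.sin ε / 4 * norm A ≤ A.re := by
    rw [hAeq]; exact sector_sqrt_re ε hε0 hε1 zA hzAne hargA _ ht
  have hBre : Real.sin ε / 4 * norm B ≤ B.re := by
    rw [hBeq]; exact sector_sqrt_re ε hε0 hε1 zB hzBne hargB _ ht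
  have hBabs2 : Real.sin ε * (b * norm l) ≤ norm B ^ 2 := by
    have h1 := sector_abs_add ε hε0 hε1 zB hargB _ ht
    rw [habsB] at h1
    calc Real.sin ε * (b * norm l) ≤ norm (zB + ((x ^ 2 : ℝ) : ℂ)) := h1
      _ = norm (B ^ 2) := by rw [hB2, hcast]
      _ = norm B ^ 2 := norm_pow B 2
  have hBabs0 : 0 < norm B := by
    nlinarith [norm_nonneg B, mul_pos hs0 (mul_pos hb0 hl0)]
  have hBre0 : 0 < B.re := lt_of_lt_of_le (by positivity) hBre
  have hAre0 : 0 ≤ A.re := le_trans (by positivity) hAre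
  set P : ℂ := A + B with hP
  have hPne : P ≠ 0 := by
    intro h
    have : P.re = 0 := by rw [h]; rfl
    rw [hP, Complex.add_re] at this
    linarith
  have hPre : Real.sin ε / 4 * norm B ≤ P.re := by
    rw [hP, Complex.add_re]; linarith
  have hPabs : Real.sin ε / 4 * norm B ≤ norm P := by
    calc Real.sin ε / 4 * norm B ≤ P.re := hPre
      _ ≤ norm P := Complex.re_le_norm P
  have hPabs2 : K * norm l ≤ norm P ^ 2 := by
    have h1 : (Real.sin ε / 4 * norm B) ^ 2 ≤ norm P ^ 2 := by
      apply sq_le_sq' _ hPabs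
      nlinarith [norm_nonneg P]
    calc K * norm l = Real.sin ε ^ 2 / 16 * (Real.sin ε * (b * norm l)) := by
          rw [hK]; ring
      _ ≤ Real.sin ε ^ 2 / 16 * norm B ^ 2 := by
          apply mul_le_mul_of_nonneg_left hBabs2 (by positivity)
      _ = (Real.sin ε / 4 * norm B) ^ 2 := by ring
      _ ≤ norm P ^ 2 := h1
  have hPabs2pos : 0 < norm P ^ 2 := lt_of_lt_of_le (by positivity) hPabs2
  -- the algebraic identity
  have hABdiff : A - B = (zA - zB) / P := by
    rw [eq_div_iff hPne, hP]
    linear_combination hA2 - hB2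
  have hm : 2 * A * B - B ^ 2 - (x : ℂ) ^ 2 = zA - ((zA - zB) / P) ^ 2 := by
    rw [← hABdiff]
    linear_combination hA2
  rw [hm]
  have hqabs : norm ((zA - zB) / P) ^ 2 ≤ (a - b) ^ 2 / K * norm l := by
    have hnum : norm (zA - zB) = |a - b| * norm l := by
      have : zA - zB = (((a - b : ℝ)) : ℂ) * l := by rw [hzA, hzB]; push_cast; ring
      rw [this, norm_mul, Complex.norm_real, Real.norm_eq_abs]
    rw [norm_div, div_pow, hnum]
    rw [div_le_iff₀ hPabs2pos]
    calc (|a - b| * norm l) ^ 2 = (a - b) ^ 2 * norm l ^ 2 := by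
          rw [mul_pow, sq_abs]
      _ = (a - b) ^ 2 / K * norm l * (K * norm l) := by
          field_simp
      _ ≤ (a - b) ^ 2 / K * norm l * norm P ^ 2 := by
          apply mul_le_mul_of_nonneg_left hPabs2 (by positivity)
  calc norm (zA - ((zA - zB) / P) ^ 2)
      ≤ norm zA + norm (((zA - zB) / P) ^ 2) := by
        exact (norm_sub_le _ _)
    _ = a * norm l + norm ((zA - zB) / P) ^ 2 := by
        rw [habsA, norm_pow]
    _ ≤ a * norm l + (a - b) ^ 2 / K * norm l := by linarith
    _ = (a + (a - b) ^ 2 / K) * norm l := by ring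
end

section
/- Let X be a complex Banach space, 0 < ε < π/2, λ₀ > 0 and C₀ > 0. Let F : ℂ → X be holomorphic on the open set {λ ∈ Σ_ε : |λ| > λ₀} and satisfy ‖F(λ)‖ ≤ C₀|λ|^{−1} for all λ in that set. Let γ > 0 satisfy γ sin ε > λ₀, and let t > 0. Then the contour integral I(t) := ∫_0^∞ ( e^{λ₊(r)t} e^{i(π−ε)} F(λ₊(r)) − e^{λ₋(r)t} e^{−i(π−ε)} F(λ₋(r)) ) dr, with λ_±(r) = γ + r e^{±i(π−ε)}, converges absolutely, and the vertical-line integral converges to it: lim_{R→∞} i ∫_{−R}^{R} e^{(γ+iτ)t} F(γ+iτ) dτ = I(t). -/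
open MeasureTheory

/-- The point `λ₊(r) = γ + r e^{i(π−ε)}` on the upper ray of the shifted sector contour. -/
noncomputable def lamP (γ ε r : ℝ) : ℂ :=
  (γ : ℂ) + (r : ℂ) * Complex.exp (Complex.I * ((Real.pi - ε : ℝ) : ℂ))

/-- The point `λ₋(r) = γ + r e^{−i(π−ε)}` on the lower ray of the shifted sector contour. -/
noncomputable def lamM (γ ε r : ℝ) : ℂ :=
  (γ : ℂ) + (r : ℂ) * Complex.exp (-(Complex.I * ((Real.pi - ε : ℝ) : ℂ)))

/-- The integrand `e^{λ₊(r)t} e^{i(π−ε)} F(λ₊(r)) − e^{λ₋(r)t} e^{−i(π−ε)} F(λ₋(r))`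
of the contour integral on the shifted sector contour. -/
noncomputable def sectorIntegrand {X : Type*} [NormedAddCommGroup X] [NormedSpace ℂ X]
    (F : ℂ → X) (γ ε t r : ℝ) : X :=
  (Complex.exp (lamP γ ε r * (t : ℂ)) * Complex.exp (Complex.I * ((Real.pi - ε : ℝ) : ℂ))) •
      F (lamP γ ε r) -
    (Complex.exp (lamM γ ε r * (t : ℂ)) *
        Complex.exp (-(Complex.I * ((Real.pi - ε : ℝ) : ℂ)))) •
      F (lamM γ ε r)

namespace CDaux

open Real Complex Set intervalIntegral Filter

/-- A point of the translated sector: `γ + ρ e^{iθ}`. -/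
noncomputable def pt (γ ρ θ : ℝ) : ℂ := (γ : ℂ) + (ρ : ℂ) * Complex.exp (θ * Complex.I)

lemma pt_re (γ ρ θ : ℝ) : (pt γ ρ θ).re = γ + ρ * Real.cos θ := by
  simp [pt, Complex.exp_mul_I, Complex.add_re, Complex.mul_re, Complex.cos_ofReal_re,
    Complex.sin_ofReal_re]

lemma pt_im (γ ρ θ : ℝ) : (pt γ ρ θ).im = ρ * Real.sin θ := by
  simp [pt, Complex.exp_mul_I, Complex.add_im, Complex.mul_im, Complex.cos_ofReal_re,
    Complex.sin_ofReal_re]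

lemma norm_exp_mul_I (θ : ℝ) : ‖Complex.exp ((θ:ℂ) * Complex.I)‖ = 1 := by
  rw [Complex.norm_exp_ofReal_mul_I]

lemma exp_add_mul_I' (x y : ℝ) :
    Complex.exp ((x:ℂ) + (y:ℂ) * Complex.I) = (Real.exp x : ℂ) * Complex.exp ((y:ℂ) * Complex.I) := by
  rw [Complex.exp_add, Complex.ofReal_exp]

lemma exp_pi_div_two_mul_I : Complex.exp (((π/2 : ℝ):ℂ) * Complex.I) = Complex.I := by
  rw [Complex.exp_mul_I, ← Complex.ofReal_cos, ← Complex.ofReal_sin, Real.cos_pi_div_two,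
    Real.sin_pi_div_two]
  simp

lemma exp_neg_pi_div_two_mul_I : Complex.exp (((-(π/2) : ℝ):ℂ) * Complex.I) = -Complex.I := by
  rw [Complex.exp_mul_I, ← Complex.ofReal_cos, ← Complex.ofReal_sin, Real.cos_neg, Real.sin_neg,
    Real.cos_pi_div_two, Real.sin_pi_div_two]
  simp

lemma pt_pi_div_two (γ r : ℝ) : pt γ r (π/2) = (γ:ℂ) + (r:ℂ) * Complex.I := by
  rw [pt, exp_pi_div_two_mul_I]

lemma pt_neg_pi_div_two (γ r : ℝ) : pt γ r (-(π/2)) = (γ:ℂ) + (-r:ℝ) * Complex.I := by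
  rw [pt, exp_neg_pi_div_two_mul_I]
  push_cast
  ring

lemma sin_ge {ε θ : ℝ} (hε0 : 0 < ε) (hε1 : ε < π/2) (hθ : |θ| ≤ π - ε)
    (hc : Real.cos θ < 0) : Real.sin ε ≤ |Real.sin θ| := by
  have h1 : π/2 < |θ| := by
    by_contra h
    push_neg at h
    have : 0 ≤ Real.cos θ := by
      rw [← Real.cos_abs]
      exact Real.cos_nonneg_of_mem_Icc ⟨by linarith [abs_nonneg θ, Real.pi_pos], h⟩
    linarith
  have h2 : |Real.sin θ| = Real.sin |θ| := by
    rcases le_or_gt 0 θ with h | h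
    · rw [_root_.abs_of_nonneg h, _root_.abs_of_nonneg]
      exact Real.sin_nonneg_of_nonneg_of_le_pi h (by rw [_root_.abs_of_nonneg h] at hθ; linarith)
    · have hsn : Real.sin (-θ) ≥ 0 := Real.sin_nonneg_of_nonneg_of_le_pi (by linarith)
        (by rw [abs_of_neg h] at hθ; linarith)
      rw [Real.sin_neg] at hsn
      rw [abs_of_neg h, Real.sin_neg, abs_of_nonpos (by linarith)]
  rw [h2]
  calc Real.sin ε ≤ Real.sin (π - |θ|) :=
        Real.sin_le_sin_of_le_of_le_pi_div_two (by linarith [Real.pi_pos]) (by linarith)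
          (by linarith)
    _ = Real.sin |θ| := Real.sin_pi_sub _

lemma abs_pt_ge {γ ε : ℝ} (hγ : 0 < γ) (hε0 : 0 < ε) (hε1 : ε < π/2) {ρ θ : ℝ}
    (hρ : 0 ≤ ρ) (hθ : |θ| ≤ π - ε) : γ * Real.sin ε ≤ ‖pt γ ρ θ‖ := by
  have hsε : 0 < Real.sin ε := Real.sin_pos_of_pos_of_lt_pi hε0 (by linarith [Real.pi_pos])
  have hsε1 : Real.sin ε ≤ 1 := Real.sin_le_one ε
  rcases le_or_gt 0 (Real.cos θ) with hc | hc
  · calc γ * Real.sin ε ≤ γ := by nlinarith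
    _ ≤ (pt γ ρ θ).re := by rw [pt_re]; nlinarith
    _ ≤ ‖pt γ ρ θ‖ := Complex.re_le_norm _
  · have hs := sin_ge hε0 hε1 hθ hc
    have habs : Real.sin ε * Real.sin ε ≤ Real.sin θ * Real.sin θ := by
      have := mul_self_le_mul_self hsε.le hs
      simpa [abs_mul_abs_self] using this
    have hsq : (γ * Real.sin ε)^2 ≤ (‖pt γ ρ θ‖)^2 := by
      rw [Complex.sq_norm, Complex.normSq_apply, pt_re, pt_im]
      have e1 : ρ^2*Real.sin θ^2 + ρ^2*Real.cos θ^2 = ρ^2 := by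
        linear_combination ρ^2 * Real.sin_sq_add_cos_sq θ
      have e2 : γ^2*Real.sin θ^2 + γ^2*Real.cos θ^2 = γ^2 := by
        linear_combination γ^2 * Real.sin_sq_add_cos_sq θ
      have e3 : γ^2*(Real.sin ε*Real.sin ε) ≤ γ^2*(Real.sin θ*Real.sin θ) :=
        mul_le_mul_of_nonneg_left habs (sq_nonneg γ)
      nlinarith [sq_nonneg (ρ + γ * Real.cos θ), e1, e2, e3]
    exact le_of_pow_le_pow_left₀ two_ne_zero (norm_nonneg _) hsq

lemma abs_pt_ge_sub {γ ρ θ : ℝ} (hρ : 0 ≤ ρ) (hγ : 0 ≤ γ) :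
    ρ - γ ≤ ‖pt γ ρ θ‖ := by
  have h0 : ‖(ρ:ℂ) * Complex.exp (θ * Complex.I)‖ = ρ := by
    rw [norm_mul, Complex.norm_exp_ofReal_mul_I,
      Complex.norm_real, Real.norm_eq_abs, _root_.abs_of_nonneg hρ, mul_one]
  have h1 : pt γ ρ θ - (γ:ℂ) = (ρ:ℂ) * Complex.exp (θ * Complex.I) := by rw [pt]; ring
  have h2 := norm_sub_le (pt γ ρ θ) ((γ:ℂ))
  rw [h1, h0] at h2
  have h3 : ‖((γ:ℂ))‖ = γ := by
    rw [Complex.norm_real, Real.norm_eq_abs, _root_.abs_of_nonneg hγ]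
  rw [h3] at h2
  linarith

lemma abs_arg_pt_le {γ ε : ℝ} (hγ : 0 < γ) (hε0 : 0 < ε) (hε1 : ε < π/2) {ρ θ : ℝ}
    (hρ : 0 ≤ ρ) (hθ : |θ| ≤ π - ε) : |Complex.arg (pt γ ρ θ)| ≤ π - ε := by
  have hsε : 0 < Real.sin ε := Real.sin_pos_of_pos_of_lt_pi hε0 (by linarith [Real.pi_pos])
  have habspos : 0 < ‖pt γ ρ θ‖ :=
    lt_of_lt_of_le (by positivity) (abs_pt_ge hγ hε0 hε1 hρ hθ)
  have hne : pt γ ρ θ ≠ 0 := by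
    intro h; rw [h] at habspos; simp at habspos
  have hcos0 : 0 ≤ Real.cos ε := Real.cos_nonneg_of_mem_Icc ⟨by linarith [Real.pi_pos], hε1.le⟩
  have hcos1 : Real.cos ε ≤ 1 := Real.cos_le_one ε
  have hcosθ : -Real.cos ε ≤ Real.cos θ := by
    have h1 : Real.cos (π - ε) ≤ Real.cos |θ| :=
      Real.cos_le_cos_of_nonneg_of_le_pi (abs_nonneg θ) (by linarith [Real.pi_pos]) hθ
    rw [Real.cos_pi_sub, Real.cos_abs] at h1
    exact h1
  have habs2 : ρ ≤ ‖pt γ ρ θ‖ + γ := by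
    have h0 : ‖(ρ:ℂ) * Complex.exp (θ * Complex.I)‖ = ρ := by
      rw [norm_mul, Complex.norm_exp_ofReal_mul_I, Complex.norm_real, Real.norm_eq_abs, _root_.abs_of_nonneg hρ,
        mul_one]
    have h1 : (ρ:ℂ) * Complex.exp (θ * Complex.I) = pt γ ρ θ + (-(γ:ℂ)) := by
      rw [pt]; ring
    have h2 := norm_add_le (pt γ ρ θ) (-(γ:ℂ))
    rw [← h1, h0] at h2
    simpa [Complex.norm_real, _root_.abs_of_nonneg hγ.le] using h2
  have hcosarg : Real.cos (π - ε) ≤ Real.cos (arg (pt γ ρ θ)) := by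
    rw [Complex.cos_arg hne, Real.cos_pi_sub, le_div_iff₀ habspos, pt_re]
    nlinarith [mul_nonneg hcos0 (by linarith : (0:ℝ) ≤ ‖pt γ ρ θ‖ + γ - ρ),
      mul_nonneg hρ (by linarith : (0:ℝ) ≤ Real.cos θ + Real.cos ε)]
  by_contra h
  push_neg at h
  have h2 : Real.cos |arg (pt γ ρ θ)| < Real.cos (π - ε) :=
    Real.cos_lt_cos_of_nonneg_of_le_pi (by linarith [Real.pi_pos]) (Complex.abs_arg_le_pi _) h
  rw [Real.cos_abs] at h2
  linarith

variable {X : Type*} [NormedAddCommGroup X] [NormedSpace ℂ X] [CompleteSpace X]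

/-- Cauchy's theorem in an annular sector, from the rectangle version via `w ↦ γ + e^w`. -/
lemma annular_cauchy (f : ℂ → X) (γ : ℝ) (a b θ₁ θ₂ : ℝ) (hab : a ≤ b) (hθ : θ₁ ≤ θ₂)
    (hd : ∀ ρ θ : ℝ, Real.exp a ≤ ρ → ρ ≤ Real.exp b → θ₁ ≤ θ → θ ≤ θ₂ →
      DifferentiableAt ℂ f (pt γ ρ θ)) :
    (∫ r in Real.exp a..Real.exp b, Complex.exp ((θ₁:ℂ) * Complex.I) • f (pt γ r θ₁))
      - (∫ r in Real.exp a..Real.exp b, Complex.exp ((θ₂:ℂ) * Complex.I) • f (pt γ r θ₂))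
      + Complex.I • (∫ θ in θ₁..θ₂,
          ((Real.exp b : ℂ) * Complex.exp ((θ:ℂ) * Complex.I)) • f (pt γ (Real.exp b) θ))
      - Complex.I • (∫ θ in θ₁..θ₂,
          ((Real.exp a : ℂ) * Complex.exp ((θ:ℂ) * Complex.I)) • f (pt γ (Real.exp a) θ)) = 0 := by
  set g : ℂ → X := fun w => Complex.exp w • f ((γ:ℂ) + Complex.exp w) with hg
  have key : ∀ w : ℂ, a ≤ w.re → w.re ≤ b → θ₁ ≤ w.im → w.im ≤ θ₂ → DifferentiableAt ℂ g w := by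
    intro w h1 h2 h3 h4
    have hw : (γ:ℂ) + Complex.exp w = pt γ (Real.exp w.re) w.im := by
      rw [pt, ← exp_add_mul_I', Complex.re_add_im]
    have hdf : DifferentiableAt ℂ f ((γ:ℂ) + Complex.exp w) := by
      rw [hw]
      exact hd _ _ (Real.exp_le_exp.2 h1) (Real.exp_le_exp.2 h2) h3 h4
    exact (Complex.differentiable_exp _).smul ((hdf.comp w
      (((differentiable_const _).add Complex.differentiable_exp) w)))
  have hrect := Complex.integral_boundary_rect_eq_zero_of_differentiableOn g
    ((a:ℂ) + (θ₁:ℂ) * Complex.I) ((b:ℂ) + (θ₂:ℂ) * Complex.I) ?hd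
  case hd =>
    intro w hw
    simp only [Complex.mem_reProdIm, Complex.add_re, Complex.ofReal_re, Complex.mul_re,
      Complex.I_re, Complex.ofReal_im, Complex.I_im, Complex.add_im, Complex.mul_im] at hw
    have hw1 : w.re ∈ uIcc a b := by simpa using hw.1
    have hw2 : w.im ∈ uIcc θ₁ θ₂ := by simpa using hw.2
    rw [uIcc_of_le hab] at hw1
    rw [uIcc_of_le hθ] at hw2
    exact (key w hw1.1 hw1.2 hw2.1 hw2.2).differentiableWithinAt
  have hfc : ∀ ρ θ : ℝ, Real.exp a ≤ ρ → ρ ≤ Real.exp b → θ₁ ≤ θ → θ ≤ θ₂ →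
      ContinuousAt f (pt γ ρ θ) := fun ρ θ h1 h2 h3 h4 => (hd ρ θ h1 h2 h3 h4).continuousAt
  have hedge : ∀ y₀ : ℝ, θ₁ ≤ y₀ → y₀ ≤ θ₂ →
      (∫ x in a..b, g ((x:ℂ) + (y₀:ℂ) * Complex.I))
        = ∫ r in Real.exp a..Real.exp b, Complex.exp ((y₀:ℂ) * Complex.I) • f (pt γ r y₀) := by
    intro y₀ hy₁ hy₂
    have hcont : ContinuousOn (fun r : ℝ => Complex.exp ((y₀:ℂ) * Complex.I) • f (pt γ r y₀))
        (Real.exp '' uIcc a b) := by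
      intro r hr
      obtain ⟨x, hx, rfl⟩ := hr
      rw [uIcc_of_le hab] at hx
      have hptc : Continuous fun r : ℝ => pt γ r y₀ := by
        simp only [pt]; fun_prop
      have : ContinuousAt (fun r : ℝ => f (pt γ r y₀)) (Real.exp x) :=
        ContinuousAt.comp (hfc _ _ (Real.exp_le_exp.2 hx.1) (Real.exp_le_exp.2 hx.2) hy₁ hy₂)
          hptc.continuousAt
      exact (this.const_smul _).continuousWithinAt
    have hsub := intervalIntegral.integral_comp_smul_deriv'
      (f := Real.exp) (f' := Real.exp)
      (g := fun r : ℝ => Complex.exp ((y₀:ℂ) * Complex.I) • f (pt γ r y₀))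
      (a := a) (b := b) (fun x _ => Real.hasDerivAt_exp x)
      Real.continuous_exp.continuousOn hcont
    rw [← hsub]
    apply intervalIntegral.integral_congr
    intro x _
    show g ((x:ℂ) + (y₀:ℂ) * Complex.I) = _
    rw [hg]
    simp only [Function.comp]
    rw [exp_add_mul_I', mul_smul, Complex.coe_smul]
    congr 1
  have hvert : ∀ c : ℝ, (fun y : ℝ => g ((c:ℂ) + (y:ℂ) * Complex.I))
      = fun y : ℝ =>
        ((Real.exp c : ℂ) * Complex.exp ((y:ℂ) * Complex.I)) • f (pt γ (Real.exp c) y) := by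
    intro c
    funext y
    rw [hg]
    simp only []
    rw [exp_add_mul_I']
    congr 1
  simp only [Complex.add_re, Complex.ofReal_re, Complex.mul_re, Complex.I_re, Complex.ofReal_im,
    Complex.I_im, Complex.add_im, Complex.mul_im, mul_zero, mul_one, zero_mul, sub_zero,
    add_zero, zero_add, zero_sub, neg_zero] at hrect
  rw [hedge θ₁ le_rfl hθ, hedge θ₂ hθ le_rfl, hvert a, hvert b] at hrect
  exact hrect

/-- Cauchy's theorem in a (full) sector of radius `R`, letting the inner radius go to `0`. -/
lemma sector_cauchy (f : ℂ → X) (γ : ℝ) (R θ₁ θ₂ : ℝ) (hR : 0 < R) (hθ : θ₁ ≤ θ₂)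
    (hd : ∀ ρ θ : ℝ, 0 ≤ ρ → ρ ≤ R → θ₁ ≤ θ → θ ≤ θ₂ → DifferentiableAt ℂ f (pt γ ρ θ)) :
    (∫ r in (0:ℝ)..R, Complex.exp ((θ₁:ℂ) * Complex.I) • f (pt γ r θ₁))
      - (∫ r in (0:ℝ)..R, Complex.exp ((θ₂:ℂ) * Complex.I) • f (pt γ r θ₂))
      + Complex.I • (∫ θ in θ₁..θ₂,
          ((R : ℂ) * Complex.exp ((θ:ℂ) * Complex.I)) • f (pt γ R θ)) = 0 := by
  have hptc : Continuous fun p : ℝ × ℝ => pt γ p.1 p.2 := by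
    simp only [pt]; fun_prop
  have hPcont : ContinuousOn (fun p : ℝ × ℝ => f (pt γ p.1 p.2)) (Icc 0 R ×ˢ Icc θ₁ θ₂) := by
    intro p hp
    exact (ContinuousAt.comp (g := f) (f := fun p : ℝ × ℝ => pt γ p.1 p.2)
      ((hd p.1 p.2 hp.1.1 hp.1.2 hp.2.1 hp.2.2).continuousAt) hptc.continuousAt).continuousWithinAt
  obtain ⟨M, hM⟩ := (isCompact_Icc.prod isCompact_Icc).exists_bound_of_continuousOn hPcont
  have hM0 : 0 ≤ M := le_trans (norm_nonneg _) (hM (0, θ₁) (by simp [hR.le, hθ]))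
  have hMf : ∀ ρ θ : ℝ, 0 ≤ ρ → ρ ≤ R → θ₁ ≤ θ → θ ≤ θ₂ → ‖f (pt γ ρ θ)‖ ≤ M := by
    intro ρ θ h1 h2 h3 h4
    exact hM (ρ, θ) ⟨⟨h1, h2⟩, ⟨h3, h4⟩⟩
  set h : ℝ → ℝ → X := fun y r => Complex.exp ((y:ℂ) * Complex.I) • f (pt γ r y) with hh
  have hhc : ∀ y : ℝ, θ₁ ≤ y → y ≤ θ₂ → ContinuousOn (h y) (Icc 0 R) := by
    intro y hy1 hy2 r hr
    have : ContinuousAt (fun r : ℝ => f (pt γ r y)) r := by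
      have h2 : Continuous fun r : ℝ => pt γ r y := by simp only [pt]; fun_prop
      exact ContinuousAt.comp ((hd r y hr.1 hr.2 hy1 hy2).continuousAt) h2.continuousAt
    exact (this.const_smul _).continuousWithinAt
  have hInt : ∀ y : ℝ, θ₁ ≤ y → y ≤ θ₂ → ∀ u v : ℝ, u ∈ Icc (0:ℝ) R → v ∈ Icc (0:ℝ) R →
      IntervalIntegrable (h y) volume u v := by
    intro y hy1 hy2 u v hu hv
    exact ((hhc y hy1 hy2).mono (uIcc_subset_Icc hu hv)).intervalIntegrable
  have hnorm : ∀ y r : ℝ, θ₁ ≤ y → y ≤ θ₂ → 0 ≤ r → r ≤ R → ‖h y r‖ ≤ M := by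
    intro y r hy1 hy2 hr1 hr2
    rw [hh]
    simp only [norm_smul, norm_exp_mul_I, one_mul]
    exact hMf r y hr1 hr2 hy1 hy2
  have hid : ∀ᶠ a in atBot, (∫ r in Real.exp a..R, h θ₁ r) - (∫ r in Real.exp a..R, h θ₂ r)
      + Complex.I • (∫ θ in θ₁..θ₂, ((R:ℂ) * Complex.exp ((θ:ℂ) * Complex.I)) • f (pt γ R θ))
      - Complex.I • (∫ θ in θ₁..θ₂,
          ((Real.exp a : ℂ) * Complex.exp ((θ:ℂ) * Complex.I)) • f (pt γ (Real.exp a) θ)) = 0 := by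
    filter_upwards [eventually_le_atBot (Real.log R)] with a ha
    have := annular_cauchy f γ a (Real.log R) θ₁ θ₂ ha hθ ?_
    · rwa [Real.exp_log hR] at this
    · intro ρ θ h1 h2 h3 h4
      rw [Real.exp_log hR] at h2
      exact hd ρ θ (le_trans (Real.exp_pos a).le h1) h2 h3 h4
  have hexp0 : Tendsto (fun a : ℝ => Real.exp a) atBot (nhds 0) := Real.tendsto_exp_atBot
  have hsmall : ∀ᶠ a in atBot, Real.exp a ≤ R := by
    filter_upwards [eventually_le_atBot (Real.log R)] with a ha
    calc Real.exp a ≤ Real.exp (Real.log R) := Real.exp_le_exp.2 ha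
    _ = R := Real.exp_log hR
  have hterm : ∀ y : ℝ, θ₁ ≤ y → y ≤ θ₂ →
      Tendsto (fun a : ℝ => ∫ r in Real.exp a..R, h y r) atBot
        (nhds (∫ r in (0:ℝ)..R, h y r)) := by
    intro y hy1 hy2
    have heq : (fun a : ℝ => ∫ r in Real.exp a..R, h y r)
        =ᶠ[atBot] (fun a : ℝ => (∫ r in (0:ℝ)..R, h y r) - (∫ r in (0:ℝ)..Real.exp a, h y r)) := by
      filter_upwards [hsmall] with a ha
      rw [intervalIntegral.integral_interval_sub_left
        (hInt y hy1 hy2 0 R (by simp [hR.le]) (by simp [hR.le]))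
        (hInt y hy1 hy2 0 (Real.exp a) (by simp [hR.le]) ⟨(Real.exp_pos a).le, ha⟩)]
    rw [show nhds (∫ r in (0:ℝ)..R, h y r) = nhds ((∫ r in (0:ℝ)..R, h y r) - 0) by rw [sub_zero]]
    apply Tendsto.congr' heq.symm
    apply Tendsto.sub tendsto_const_nhds
    apply squeeze_zero_norm' (a := fun a => M * |Real.exp a - 0|)
    · filter_upwards [hsmall] with a ha
      apply intervalIntegral.norm_integral_le_of_norm_le_const
      intro r hr
      rw [uIoc_of_le (Real.exp_pos a).le] at hr
      exact hnorm y r hy1 hy2 hr.1.le (hr.2.trans ha)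
    · have : Tendsto (fun a : ℝ => M * |Real.exp a - 0|) atBot (nhds (M * |0 - 0|)) :=
        tendsto_const_nhds.mul ((hexp0.sub tendsto_const_nhds).abs)
      simpa using this
  have harc : Tendsto (fun a : ℝ => Complex.I • (∫ θ in θ₁..θ₂,
      ((Real.exp a : ℂ) * Complex.exp ((θ:ℂ) * Complex.I)) • f (pt γ (Real.exp a) θ)))
      atBot (nhds 0) := by
    apply squeeze_zero_norm' (a := fun a => Real.exp a * M * |θ₂ - θ₁|)
    · filter_upwards [hsmall] with a ha
      rw [norm_smul, Complex.norm_I, one_mul]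
      apply intervalIntegral.norm_integral_le_of_norm_le_const
      intro θ hθ'
      rw [uIoc_of_le hθ] at hθ'
      rw [norm_smul]
      have h1 : ‖(Real.exp a : ℂ) * Complex.exp ((θ:ℂ) * Complex.I)‖ = Real.exp a := by
        rw [norm_mul, norm_exp_mul_I, mul_one, Complex.norm_real, Real.norm_eq_abs,
          abs_of_pos (Real.exp_pos a)]
      rw [h1]
      exact mul_le_mul_of_nonneg_left
        (hMf (Real.exp a) θ (Real.exp_pos a).le ha hθ'.1.le hθ'.2) (Real.exp_pos a).le
    · have : Tendsto (fun a : ℝ => Real.exp a * M * |θ₂ - θ₁|) atBot (nhds (0 * M * |θ₂ - θ₁|)) :=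
        ((hexp0.mul tendsto_const_nhds).mul tendsto_const_nhds)
      simpa using this
  have hlim : Tendsto (fun a : ℝ => (∫ r in Real.exp a..R, h θ₁ r) - (∫ r in Real.exp a..R, h θ₂ r)
      + Complex.I • (∫ θ in θ₁..θ₂, ((R:ℂ) * Complex.exp ((θ:ℂ) * Complex.I)) • f (pt γ R θ))
      - Complex.I • (∫ θ in θ₁..θ₂,
          ((Real.exp a : ℂ) * Complex.exp ((θ:ℂ) * Complex.I)) • f (pt γ (Real.exp a) θ)))
      atBot (nhds ((∫ r in (0:ℝ)..R, h θ₁ r) - (∫ r in (0:ℝ)..R, h θ₂ r)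
      + Complex.I • (∫ θ in θ₁..θ₂, ((R:ℂ) * Complex.exp ((θ:ℂ) * Complex.I)) • f (pt γ R θ))
        - 0)) := by
    exact (((hterm θ₁ le_rfl hθ).sub (hterm θ₂ hθ le_rfl)).add tendsto_const_nhds).sub harc
  have h0 : Tendsto (fun _ : ℝ => (0 : X)) atBot (nhds 0) := tendsto_const_nhds
  have := tendsto_nhds_unique (hlim.congr' hid) h0
  rw [sub_zero] at this
  exact this

/-- The arc contribution at radius `R` vanishes as `R → ∞`. -/
lemma arc_vanish (f : ℂ → X) (γ ε t C θ₁ θ₂ : ℝ) (hγ : 0 < γ) (ht : 0 < t) (hC : 0 ≤ C)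
    (hε0 : 0 < ε) (hε1 : ε < π/2) (hθ : θ₁ ≤ θ₂)
    (hr2 : ∀ θ : ℝ, θ₁ ≤ θ → θ ≤ θ₂ → π/2 ≤ |θ| ∧ |θ| ≤ π - ε)
    (hro : ∀ θ : ℝ, θ₁ < θ → θ < θ₂ → π/2 < |θ|)
    (hfb : ∀ R θ : ℝ, 0 ≤ R → θ₁ ≤ θ → θ ≤ θ₂ →
      ‖f (pt γ R θ)‖ ≤ C / ‖pt γ R θ‖ * Real.exp (R * (Real.cos θ * t))) :
    Tendsto (fun R : ℝ => Complex.I • ∫ θ in θ₁..θ₂,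
      ((R:ℂ) * Complex.exp ((θ:ℂ) * Complex.I)) • f (pt γ R θ)) atTop (nhds 0) := by
  set B : ℝ → ℝ → ℝ := fun R θ => 2 * C * Real.exp (R * (Real.cos θ * t)) with hB
  have hcos : ∀ θ : ℝ, θ₁ ≤ θ → θ ≤ θ₂ → Real.cos θ ≤ 0 := by
    intro θ h1 h2
    obtain ⟨ha, hb⟩ := hr2 θ h1 h2
    rw [← Real.cos_abs]
    exact Real.cos_nonpos_of_pi_div_two_le_of_le ha (by linarith [Real.pi_pos])
  have hBcont : ∀ R : ℝ, ContinuousOn (B R) (uIcc θ₁ θ₂) := by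
    intro R
    apply Continuous.continuousOn
    fun_prop
  apply squeeze_zero_norm' (a := fun R : ℝ => |∫ θ in θ₁..θ₂, B R θ|)
  · filter_upwards [eventually_ge_atTop (2*γ + 1)] with R hR
    have hRpos : (0:ℝ) < R := by linarith
    have hRγ : γ < R := by linarith
    rw [norm_smul, Complex.norm_I, one_mul]
    apply intervalIntegral.norm_integral_le_abs_of_norm_le
    · refine (MeasureTheory.ae_restrict_iff' measurableSet_uIoc).2
        (Filter.Eventually.of_forall fun θ hθ' => ?_)
      rw [uIoc_of_le hθ] at hθ'
      have h1 := hθ'.1.le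
      have h2 := hθ'.2
      have habs : R - γ ≤ ‖pt γ R θ‖ := abs_pt_ge_sub hRpos.le hγ.le
      have habspos : (0:ℝ) < ‖pt γ R θ‖ := by linarith
      rw [norm_smul, norm_mul, norm_exp_mul_I, mul_one, Complex.norm_real, Real.norm_eq_abs,
        _root_.abs_of_pos hRpos]
      calc R * ‖f (pt γ R θ)‖
          ≤ R * (C / ‖pt γ R θ‖ * Real.exp (R * (Real.cos θ * t))) :=
            mul_le_mul_of_nonneg_left (hfb R θ hRpos.le h1 h2) hRpos.le
        _ ≤ B R θ := by
            rw [hB]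
            have hfrac : R * (C / ‖pt γ R θ‖) ≤ 2 * C := by
              rw [mul_div_assoc']
              rw [div_le_iff₀ habspos]
              nlinarith
            have hexp : (0:ℝ) ≤ Real.exp (R * (Real.cos θ * t)) := (Real.exp_pos _).le
            nlinarith [mul_le_mul_of_nonneg_right hfrac hexp]
    · exact ((hBcont R).intervalIntegrable)
  · have h0 : (0:ℝ) = ∫ θ in Set.Ioc θ₁ θ₂, (0:ℝ) := by simp
    have key : Tendsto (fun R : ℝ => ∫ θ in Set.Ioc θ₁ θ₂, B R θ) atTop
        (nhds (∫ θ in Set.Ioc θ₁ θ₂, (0:ℝ))) := by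
      apply MeasureTheory.tendsto_integral_filter_of_dominated_convergence
        (bound := fun _ => 2 * C)
      · exact Filter.Eventually.of_forall fun R =>
          ((hBcont R).mono
            (by rw [uIcc_of_le hθ]; exact Set.Ioc_subset_Icc_self)).aestronglyMeasurable
            measurableSet_Ioc
      · filter_upwards [eventually_ge_atTop (0:ℝ)] with R hR0
        refine (MeasureTheory.ae_restrict_iff' measurableSet_Ioc).2 (Filter.Eventually.of_forall
          fun θ hθ' => ?_)
        have hc := hcos θ hθ'.1.le hθ'.2
        have hu : R * (Real.cos θ * t) ≤ 0 :=
          mul_nonpos_of_nonneg_of_nonpos hR0 (mul_nonpos_of_nonpos_of_nonneg hc ht.le)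
        have hexp : Real.exp (R * (Real.cos θ * t)) ≤ 1 := Real.exp_le_one_iff.2 hu
        show ‖2 * C * Real.exp (R * (Real.cos θ * t))‖ ≤ 2 * C
        rw [Real.norm_eq_abs, _root_.abs_of_nonneg (by positivity)]
        nlinarith [Real.exp_pos (R * (Real.cos θ * t))]
      · exact MeasureTheory.integrableOn_const measure_Ioc_lt_top.ne
      · have hae : ∀ᵐ θ ∂(volume.restrict (Set.Ioc θ₁ θ₂)), θ ∈ Set.Ioo θ₁ θ₂ := by
          rw [MeasureTheory.ae_restrict_iff' measurableSet_Ioc]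
          rw [MeasureTheory.ae_iff]
          refine measure_mono_null (t := {θ₂}) (fun θ h => ?_)
            (Real.volume_singleton (a := θ₂))
          simp only [Set.mem_setOf_eq, _root_.not_imp] at h
          obtain ⟨hmem, hnot⟩ := h
          simp only [Set.mem_singleton_iff]
          rcases eq_or_lt_of_le hmem.2 with he | hlt
          · exact he
          · exact absurd ⟨hmem.1, hlt⟩ hnot
        filter_upwards [hae] with θ hθ'
        have hcoslt : Real.cos θ < 0 := by
          have h := hro θ hθ'.1 hθ'.2
          have h2 := (hr2 θ hθ'.1.le hθ'.2.le).2
          rw [← Real.cos_abs]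
          apply Real.cos_neg_of_pi_div_two_lt_of_lt h
          linarith [Real.pi_pos]
        have hct : Real.cos θ * t < 0 := mul_neg_of_neg_of_pos hcoslt ht
        have h1 : Tendsto (fun R : ℝ => R * (Real.cos θ * t)) atTop atBot :=
          (tendsto_mul_const_atBot_of_neg hct).2 tendsto_id
        have h2 : Tendsto (fun R : ℝ => Real.exp (R * (Real.cos θ * t))) atTop (nhds 0) :=
          Real.tendsto_exp_atBot.comp h1
        have h3 : Tendsto (fun R : ℝ => 2 * C * Real.exp (R * (Real.cos θ * t))) atTop
            (nhds (2 * C * 0)) := tendsto_const_nhds.mul h2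
        simpa [hB] using h3
    rw [← h0] at key
    have heq : ∀ R : ℝ, (∫ θ in θ₁..θ₂, B R θ) = ∫ θ in Set.Ioc θ₁ θ₂, B R θ := fun R =>
      intervalIntegral.integral_of_le hθ
    have habs : Tendsto (fun R : ℝ => |∫ θ in Set.Ioc θ₁ θ₂, B R θ|) atTop (nhds |0|) := key.abs
    rw [abs_zero] at habs
    exact habs.congr fun R => by rw [heq R]

end CDaux

/-- for `t > 0`, the vertical-line inverse Laplace integral converges to
the absolutely convergent integral on the shifted sector contour. -/
theorem contour_deformation_to_sector
    (X : Type*) [NormedAddCommGroup X] [NormedSpace ℂ X] [CompleteSpace X]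
    (ε l₀ C₀ : ℝ) (hε0 : 0 < ε) (hε1 : ε < Real.pi / 2) (hl₀ : 0 < l₀) (hC₀ : 0 < C₀)
    (F : ℂ → X)
    (hhol : ∀ z : ℂ, z ≠ 0 → |Complex.arg z| ≤ Real.pi - ε → l₀ < ‖z‖ →
      DifferentiableAt ℂ F z)
    (hbd : ∀ z : ℂ, z ≠ 0 → |Complex.arg z| ≤ Real.pi - ε → l₀ < ‖z‖ →
      ‖F z‖ ≤ C₀ * (‖z‖)⁻¹)
    (γ : ℝ) (hγ : 0 < γ) (hγε : l₀ < γ * Real.sin ε)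
    (t : ℝ) (ht : 0 < t) :
    IntegrableOn (fun r : ℝ => sectorIntegrand F γ ε t r) (Set.Ioi 0) ∧
    Filter.Tendsto
      (fun R : ℝ => Complex.I •
        ∫ τ in (-R)..R,
          Complex.exp (((γ : ℂ) + (τ : ℂ) * Complex.I) * (t : ℂ)) •
            F ((γ : ℂ) + (τ : ℂ) * Complex.I))
      Filter.atTop
      (nhds (∫ r in Set.Ioi (0 : ℝ), sectorIntegrand F γ ε t r)) := by
  classical
  have hπ := Real.pi_pos
  have hφgt : Real.pi/2 < Real.pi - ε := by linarith
  have hsε : 0 < Real.sin ε := Real.sin_pos_of_pos_of_lt_pi hε0 (by linarith)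
  have hcε : 0 < Real.cos ε := Real.cos_pos_of_mem_Ioo ⟨by linarith, hε1⟩
  set f : ℂ → X := fun z => Complex.exp (z * (t:ℂ)) • F z with hf
  set F₀ : ℝ → X := fun τ =>
    Complex.exp (((γ : ℂ) + (τ : ℂ) * Complex.I) * (t : ℂ)) •
      F ((γ : ℂ) + (τ : ℂ) * Complex.I) with hF₀
  -- membership and differentiability facts for points of the sector
  have habs_ge : ∀ ρ θ : ℝ, 0 ≤ ρ → |θ| ≤ Real.pi - ε →
      γ * Real.sin ε ≤ ‖CDaux.pt γ ρ θ‖ := fun ρ θ hρ hθ =>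
    CDaux.abs_pt_ge hγ hε0 hε1 hρ hθ
  have hmem : ∀ ρ θ : ℝ, 0 ≤ ρ → |θ| ≤ Real.pi - ε →
      (CDaux.pt γ ρ θ ≠ 0 ∧ l₀ < ‖CDaux.pt γ ρ θ‖) := by
    intro ρ θ hρ hθ
    have h1 := habs_ge ρ θ hρ hθ
    constructor
    · intro h
      rw [h] at h1
      simp at h1
      nlinarith
    · linarith
  have hFd : ∀ ρ θ : ℝ, 0 ≤ ρ → |θ| ≤ Real.pi - ε →
      DifferentiableAt ℂ F (CDaux.pt γ ρ θ) := by
    intro ρ θ hρ hθ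
    obtain ⟨h1, h2⟩ := hmem ρ θ hρ hθ
    exact hhol _ h1 (CDaux.abs_arg_pt_le hγ hε0 hε1 hρ hθ) h2
  have hfd : ∀ ρ θ : ℝ, 0 ≤ ρ → |θ| ≤ Real.pi - ε →
      DifferentiableAt ℂ f (CDaux.pt γ ρ θ) := by
    intro ρ θ hρ hθ
    exact ((differentiableAt_id.mul_const ((t:ℂ))).cexp).smul (hFd ρ θ hρ hθ)
  have hnorm_f : ∀ z : ℂ, ‖f z‖ = Real.exp (z.re * t) * ‖F z‖ := by
    intro z
    rw [hf]
    simp only [norm_smul, Complex.norm_exp]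
    congr 2
    simp [Complex.mul_re]
  have hfb : ∀ ρ θ : ℝ, 0 ≤ ρ → |θ| ≤ Real.pi - ε →
      ‖f (CDaux.pt γ ρ θ)‖ ≤
        (C₀ * Real.exp (γ * t)) / ‖CDaux.pt γ ρ θ‖
          * Real.exp (ρ * (Real.cos θ * t)) := by
    intro ρ θ hρ hθ
    obtain ⟨h1, h2⟩ := hmem ρ θ hρ hθ
    have hFbd : ‖F (CDaux.pt γ ρ θ)‖ ≤ C₀ * (‖CDaux.pt γ ρ θ‖)⁻¹ :=
      hbd _ h1 (CDaux.abs_arg_pt_le hγ hε0 hε1 hρ hθ) h2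
    calc ‖f (CDaux.pt γ ρ θ)‖
        = Real.exp ((γ + ρ * Real.cos θ) * t) * ‖F (CDaux.pt γ ρ θ)‖ := by
          rw [hnorm_f, CDaux.pt_re]
      _ ≤ Real.exp ((γ + ρ * Real.cos θ) * t) * (C₀ * (‖CDaux.pt γ ρ θ‖)⁻¹) :=
          mul_le_mul_of_nonneg_left hFbd (Real.exp_pos _).le
      _ = (C₀ * Real.exp (γ * t)) / ‖CDaux.pt γ ρ θ‖
            * Real.exp (ρ * (Real.cos θ * t)) := by
          rw [show (γ + ρ * Real.cos θ) * t = γ * t + ρ * (Real.cos θ * t) by ring,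
            Real.exp_add, div_eq_mul_inv]
          ring
  -- the sector integrand in terms of `f` and `pt`
  have hsecEq : ∀ r : ℝ, sectorIntegrand F γ ε t r =
      Complex.exp (((Real.pi - ε : ℝ):ℂ) * Complex.I) • f (CDaux.pt γ r (Real.pi - ε))
      - Complex.exp (((-(Real.pi - ε) : ℝ):ℂ) * Complex.I)
          • f (CDaux.pt γ r (-(Real.pi - ε))) := by
    intro r
    have e1 : lamP γ ε r = CDaux.pt γ r (Real.pi - ε) := by
      rw [lamP, CDaux.pt, mul_comm Complex.I]
    have e2 : lamM γ ε r = CDaux.pt γ r (-(Real.pi - ε)) := by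
      rw [lamM, CDaux.pt]
      push_cast
      ring_nf
    have e3 : Complex.I * ((Real.pi - ε : ℝ):ℂ) = ((Real.pi - ε : ℝ):ℂ) * Complex.I := by ring
    have e4 : -(Complex.I * ((Real.pi - ε : ℝ):ℂ)) = ((-(Real.pi - ε) : ℝ):ℂ) * Complex.I := by
      push_cast
      ring
    have hsw : ∀ (a b : ℂ) (v : X), (a * b) • v = b • (a • v) := fun a b v => by
      rw [mul_comm, mul_smul]
    rw [sectorIntegrand, e1, e2, e4, e3]
    simp only [hf, hsw]
  -- continuity of the sector integrand
  have hptcont : ∀ θ : ℝ, Continuous fun r : ℝ => CDaux.pt γ r θ := by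
    intro θ
    simp only [CDaux.pt]
    fun_prop
  have hfrayC : ∀ θ : ℝ, |θ| ≤ Real.pi - ε →
      ContinuousOn (fun r : ℝ => f (CDaux.pt γ r θ)) (Set.Ici 0) := by
    intro θ hθ r hr
    exact (ContinuousAt.comp (g := f) (f := fun r : ℝ => CDaux.pt γ r θ)
      ((hfd r θ hr hθ).continuousAt) ((hptcont θ).continuousAt)).continuousWithinAt
  have habsφ : |Real.pi - ε| ≤ Real.pi - ε := by
    rw [_root_.abs_of_nonneg (by linarith)]
  have habsφ' : |(-(Real.pi - ε))| ≤ Real.pi - ε := by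
    rw [abs_neg, _root_.abs_of_nonneg (by linarith)]
  have hsecC : ContinuousOn (fun r : ℝ => sectorIntegrand F γ ε t r) (Set.Ici 0) := by
    apply ContinuousOn.congr (f := fun r : ℝ =>
      Complex.exp (((Real.pi - ε : ℝ):ℂ) * Complex.I) • f (CDaux.pt γ r (Real.pi - ε))
      - Complex.exp (((-(Real.pi - ε) : ℝ):ℂ) * Complex.I)
          • f (CDaux.pt γ r (-(Real.pi - ε))))
    · exact ((hfrayC _ habsφ).const_smul _).sub ((hfrayC _ habsφ').const_smul _)
    · intro r _
      exact hsecEq r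
  -- the exponential bound and integrability of the sector integrand
  have hcosφ : Real.cos (Real.pi - ε) = -Real.cos ε := Real.cos_pi_sub ε
  have hbd_sec : ∀ r : ℝ, 0 ≤ r → ‖sectorIntegrand F γ ε t r‖ ≤
      2 * ((C₀ * Real.exp (γ * t)) / (γ * Real.sin ε)) * Real.exp (r * (-Real.cos ε * t)) := by
    intro r hr
    rw [hsecEq r]
    have key : ∀ θ : ℝ, |θ| ≤ Real.pi - ε → Real.cos θ = -Real.cos ε →
        ‖f (CDaux.pt γ r θ)‖ ≤
          (C₀ * Real.exp (γ * t)) / (γ * Real.sin ε) * Real.exp (r * (-Real.cos ε * t)) := by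
      intro θ hθ hcosθ
      refine le_trans (hfb r θ hr hθ) ?_
      rw [hcosθ]
      exact mul_le_mul_of_nonneg_right
        (div_le_div_of_nonneg_left (by positivity) (by positivity) (habs_ge r θ hr hθ))
        (Real.exp_pos _).le
    have k1 := key (Real.pi - ε) habsφ hcosφ
    have k2 := key (-(Real.pi - ε)) habsφ' (by rw [Real.cos_neg]; exact hcosφ)
    have hnsm : ∀ (θ : ℝ) (v : X), ‖Complex.exp ((θ:ℂ) * Complex.I) • v‖ = ‖v‖ := fun θ v => by
      rw [norm_smul, CDaux.norm_exp_mul_I, one_mul]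
    calc ‖_ - _‖ ≤ ‖Complex.exp (((Real.pi - ε : ℝ):ℂ) * Complex.I)
            • f (CDaux.pt γ r (Real.pi - ε))‖
          + ‖Complex.exp (((-(Real.pi - ε) : ℝ):ℂ) * Complex.I)
            • f (CDaux.pt γ r (-(Real.pi - ε)))‖ := norm_sub_le _ _
      _ ≤ 2 * ((C₀ * Real.exp (γ * t)) / (γ * Real.sin ε))
            * Real.exp (r * (-Real.cos ε * t)) := by
          rw [hnsm, hnsm]
          linarith
  have hIntSec : IntegrableOn (fun r : ℝ => sectorIntegrand F γ ε t r) (Set.Ioi 0) := by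
    have hbt : 0 < Real.cos ε * t := by positivity
    have hgint : IntegrableOn
        (fun r : ℝ => 2 * ((C₀ * Real.exp (γ * t)) / (γ * Real.sin ε))
          * Real.exp (r * (-Real.cos ε * t))) (Set.Ioi 0) := by
      have h := (exp_neg_integrableOn_Ioi 0 hbt).const_mul
        (2 * ((C₀ * Real.exp (γ * t)) / (γ * Real.sin ε)))
      have heq : ∀ x : ℝ, 2 * ((C₀ * Real.exp (γ * t)) / (γ * Real.sin ε))
          * Real.exp (-(Real.cos ε * t) * x)
          = 2 * ((C₀ * Real.exp (γ * t)) / (γ * Real.sin ε))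
            * Real.exp (x * (-Real.cos ε * t)) := fun x => by ring_nf
      simpa only [heq, IntegrableOn] using h
    apply MeasureTheory.Integrable.mono' hgint
    · exact (hsecC.mono Set.Ioi_subset_Ici_self).aestronglyMeasurable measurableSet_Ioi
    · refine (MeasureTheory.ae_restrict_iff' measurableSet_Ioi).2
        (Filter.Eventually.of_forall fun r hr => hbd_sec r (le_of_lt hr))
  refine ⟨hIntSec, ?_⟩
  -- convergence of the truncated sector integrals
  have hS : Filter.Tendsto (fun R : ℝ => ∫ r in (0:ℝ)..R, sectorIntegrand F γ ε t r)
      Filter.atTop (nhds (∫ r in Set.Ioi (0:ℝ), sectorIntegrand F γ ε t r)) :=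
    MeasureTheory.intervalIntegral_tendsto_integral_Ioi 0 hIntSec Filter.tendsto_id
  -- the two arcs vanish
  have hC' : 0 ≤ C₀ * Real.exp (γ * t) := by positivity
  have harcP := CDaux.arc_vanish f γ ε t (C₀ * Real.exp (γ * t)) (Real.pi/2) (Real.pi - ε)
    hγ ht hC' hε0 hε1 (by linarith)
    (fun θ h1 h2 => by rw [_root_.abs_of_nonneg (by linarith)]; exact ⟨h1, h2⟩)
    (fun θ h1 h2 => by rw [_root_.abs_of_nonneg (by linarith)]; linarith)
    (fun R θ hR h1 h2 => hfb R θ hR (by rw [_root_.abs_of_nonneg (by linarith)]; linarith))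
  have harcM := CDaux.arc_vanish f γ ε t (C₀ * Real.exp (γ * t)) (-(Real.pi - ε)) (-(Real.pi/2))
    hγ ht hC' hε0 hε1 (by linarith)
    (fun θ h1 h2 => by rw [abs_of_nonpos (by linarith)]; constructor <;> linarith)
    (fun θ h1 h2 => by rw [abs_of_nonpos (by linarith)]; linarith)
    (fun R θ hR h1 h2 => hfb R θ hR (by rw [abs_of_nonpos (by linarith)]; linarith))
  -- the eventual identity between the vertical integral and the sector pieces
  have hkey : (fun R : ℝ => Complex.I • ∫ τ in (-R)..R, F₀ τ)
      =ᶠ[Filter.atTop] (fun R : ℝ =>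
        (∫ r in (0:ℝ)..R, sectorIntegrand F γ ε t r)
          - Complex.I • (∫ θ in (Real.pi/2)..(Real.pi - ε),
              ((R:ℂ) * Complex.exp ((θ:ℂ) * Complex.I)) • f (CDaux.pt γ R θ))
          - Complex.I • (∫ θ in (-(Real.pi - ε))..(-(Real.pi/2)),
              ((R:ℂ) * Complex.exp ((θ:ℂ) * Complex.I)) • f (CDaux.pt γ R θ))) := by
    filter_upwards [Filter.eventually_gt_atTop (0:ℝ)] with R hR
    -- Cauchy identities on the two quarter regions
    have hdU : ∀ ρ θ : ℝ, 0 ≤ ρ → ρ ≤ R → Real.pi/2 ≤ θ → θ ≤ Real.pi - ε →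
        DifferentiableAt ℂ f (CDaux.pt γ ρ θ) := fun ρ θ h1 _ h3 h4 =>
      hfd ρ θ h1 (by rw [_root_.abs_of_nonneg (by linarith)]; exact h4)
    have hdL : ∀ ρ θ : ℝ, 0 ≤ ρ → ρ ≤ R → -(Real.pi - ε) ≤ θ → θ ≤ -(Real.pi/2) →
        DifferentiableAt ℂ f (CDaux.pt γ ρ θ) := fun ρ θ h1 _ h3 h4 =>
      hfd ρ θ h1 (by rw [abs_of_nonpos (by linarith)]; linarith)
    have hU := CDaux.sector_cauchy f γ R (Real.pi/2) (Real.pi - ε) hR (by linarith) hdU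
    have hL := CDaux.sector_cauchy f γ R (-(Real.pi - ε)) (-(Real.pi/2)) hR (by linarith) hdL
    -- rewrite the `θ = ±π/2` edges as vertical integrals
    have c1 : (∫ r in (0:ℝ)..R,
        Complex.exp (((Real.pi/2 : ℝ):ℂ) * Complex.I) • f (CDaux.pt γ r (Real.pi/2)))
        = Complex.I • ∫ τ in (0:ℝ)..R, F₀ τ := by
      rw [← intervalIntegral.integral_smul]
      apply intervalIntegral.integral_congr
      intro r _
      simp only [CDaux.exp_pi_div_two_mul_I, CDaux.pt_pi_div_two]
      rfl
    have c2 : (∫ r in (0:ℝ)..R,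
        Complex.exp (((-(Real.pi/2) : ℝ):ℂ) * Complex.I) • f (CDaux.pt γ r (-(Real.pi/2))))
        = (-Complex.I) • ∫ τ in (-R)..(0:ℝ), F₀ τ := by
      have step1 : (∫ r in (0:ℝ)..R,
          Complex.exp (((-(Real.pi/2) : ℝ):ℂ) * Complex.I) • f (CDaux.pt γ r (-(Real.pi/2))))
          = ∫ r in (0:ℝ)..R, (-Complex.I) • F₀ (-r) := by
        apply intervalIntegral.integral_congr
        intro r _
        simp only [CDaux.exp_neg_pi_div_two_mul_I, CDaux.pt_neg_pi_div_two]
        rfl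
      rw [step1, intervalIntegral.integral_comp_neg (f := fun τ => (-Complex.I) • F₀ τ), neg_zero,
        intervalIntegral.integral_smul]
    -- integrability of the vertical pieces
    have hF₀cont : Continuous F₀ := by
      rw [continuous_iff_continuousAt]
      intro τ
      have hptc2 : Continuous fun s : ℝ => (γ:ℂ) + (s:ℂ) * Complex.I := by fun_prop
      rcases le_or_gt 0 τ with hτ | hτ
      · have h := (hfd τ (Real.pi/2) hτ
          (by rw [_root_.abs_of_nonneg (by linarith)]; linarith)).continuousAt
        rw [CDaux.pt_pi_div_two] at h
        exact ContinuousAt.comp (g := f) (f := fun s : ℝ => (γ:ℂ) + (s:ℂ) * Complex.I)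
          h hptc2.continuousAt
      · have h := (hfd (-τ) (-(Real.pi/2)) (by linarith)
          (by rw [abs_of_nonpos (by linarith)]; linarith)).continuousAt
        rw [CDaux.pt_neg_pi_div_two] at h
        have : CDaux.pt γ (-τ) (-(Real.pi/2)) = (γ:ℂ) + (τ:ℂ) * Complex.I := by
          rw [CDaux.pt_neg_pi_div_two]
          norm_num
        rw [CDaux.pt_neg_pi_div_two] at this
        rw [this] at h
        exact ContinuousAt.comp (g := f) (f := fun s : ℝ => (γ:ℂ) + (s:ℂ) * Complex.I)
          h hptc2.continuousAt
    have hsplit : (∫ τ in (-R)..R, F₀ τ)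
        = (∫ τ in (-R)..(0:ℝ), F₀ τ) + ∫ τ in (0:ℝ)..R, F₀ τ :=
      (intervalIntegral.integral_add_adjacent_intervals
        (hF₀cont.intervalIntegrable _ _) (hF₀cont.intervalIntegrable _ _)).symm
    -- the truncated sector integral equals the difference of the two ray integrals
    have hsec : (∫ r in (0:ℝ)..R, sectorIntegrand F γ ε t r)
        = (∫ r in (0:ℝ)..R, Complex.exp (((Real.pi - ε : ℝ):ℂ) * Complex.I)
            • f (CDaux.pt γ r (Real.pi - ε)))
          - ∫ r in (0:ℝ)..R, Complex.exp (((-(Real.pi - ε) : ℝ):ℂ) * Complex.I)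
            • f (CDaux.pt γ r (-(Real.pi - ε))) := by
      rw [← intervalIntegral.integral_sub]
      · apply intervalIntegral.integral_congr
        intro r hr
        rw [Set.uIcc_of_le hR.le] at hr
        exact hsecEq r
      · exact (((hfrayC _ habsφ).mono
          (by rw [Set.uIcc_of_le hR.le]; exact Set.Icc_subset_Ici_self)).const_smul
            _).intervalIntegrable
      · exact (((hfrayC _ habsφ').mono
          (by rw [Set.uIcc_of_le hR.le]; exact Set.Icc_subset_Ici_self)).const_smul
            _).intervalIntegrable
    rw [c1] at hU
    rw [c2] at hL
    set V := ∫ τ in (0:ℝ)..R, F₀ τ with hV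
    set W := ∫ τ in (-R)..(0:ℝ), F₀ τ with hW
    set RayU := ∫ r in (0:ℝ)..R, Complex.exp (((Real.pi - ε : ℝ):ℂ) * Complex.I)
        • f (CDaux.pt γ r (Real.pi - ε)) with hRayU
    set RayL := ∫ r in (0:ℝ)..R, Complex.exp (((-(Real.pi - ε) : ℝ):ℂ) * Complex.I)
        • f (CDaux.pt γ r (-(Real.pi - ε))) with hRayL
    set ArcU := Complex.I • (∫ θ in (Real.pi/2)..(Real.pi - ε),
        ((R:ℂ) * Complex.exp ((θ:ℂ) * Complex.I)) • f (CDaux.pt γ R θ)) with hArcU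
    set ArcL := Complex.I • (∫ θ in (-(Real.pi - ε))..(-(Real.pi/2)),
        ((R:ℂ) * Complex.exp ((θ:ℂ) * Complex.I)) • f (CDaux.pt γ R θ)) with hArcL
    rw [hsplit, smul_add, hsec]
    have h1 : Complex.I • V = RayU - ArcU := by
      apply sub_eq_zero.1
      calc Complex.I • V - (RayU - ArcU) = Complex.I • V - RayU + ArcU := by abel
        _ = 0 := hU
    have h2 : Complex.I • W = -RayL - ArcL := by
      apply sub_eq_zero.1
      calc Complex.I • W - (-RayL - ArcL)
          = RayL - (-Complex.I) • W + ArcL := by rw [neg_smul]; abel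
        _ = 0 := hL
    rw [h1, h2]
    abel
  -- conclude
  have hfinal := (hS.sub harcP).sub harcM
  rw [sub_zero, sub_zero] at hfinal
  exact Filter.Tendsto.congr' (Filter.EventuallyEq.symm hkey) hfinal
end

section
/- Let X be a complex Banach space, γ > 0 and C₀ > 0, and let F : ℂ → X be holomorphic on an open set containing the closed half-plane {λ ∈ ℂ : Re λ ≥ γ} and satisfy ‖F(λ)‖ ≤ C₀|λ|^{−1} there. Then for every t < 0: lim_{R→∞} ∫_{−R}^{R} e^{(γ+iτ)t} F(γ+iτ) dτ = 0 and lim_{R→∞} ∫_{−R}^{R} (γ+iτ)^{1/2} e^{(γ+iτ)t} F(γ+iτ) dτ = 0, where (γ+iτ)^{1/2} is the principal square root. (Hence the inverse Laplace transform of F, and its half-order time derivative Λ^{1/2}, vanish for negative times.) -/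
open Complex Filter MeasureTheory Set intervalIntegral

namespace InvLapAux

variable {X : Type*} [NormedAddCommGroup X] [NormedSpace ℂ X] [CompleteSpace X]

/-- Bound on a horizontal segment integral. -/
lemma horiz (G : ℂ → X) (γ C t a : ℝ) (hγ : 0 < γ) (ht : t < 0) (hC : 0 ≤ C) (ha : 0 < a)
    (hbd : ∀ z : ℂ, γ ≤ z.re → ‖G z‖ ≤ C * Real.exp (t * z.re) * ‖z‖ ^ (-a))
    (b : ℝ) (hb : γ ≤ b) (R c : ℝ) (hR : 0 < R) (hc : R ≤ |c|) :
    ‖∫ x in γ..b, G (↑x + ↑c * Complex.I)‖ ≤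
      C * R ^ (-a) * (Real.exp (t * γ) * (-t)⁻¹) := by
  have hRa : (0:ℝ) ≤ R ^ (-a) := Real.rpow_nonneg hR.le _
  have key : ‖∫ x in γ..b, G (↑x + ↑c * Complex.I)‖ ≤
      |∫ x in γ..b, C * R ^ (-a) * Real.exp (t * x)| := by
    apply intervalIntegral.norm_integral_le_abs_of_norm_le
    · filter_upwards [ae_restrict_mem measurableSet_uIoc] with x hx
      rw [uIoc_of_le hb] at hx
      have hre : ((↑x + ↑c * Complex.I : ℂ)).re = x := by simp
      have h1 := hbd (↑x + ↑c * Complex.I) (by rw [hre]; exact hx.1.le)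
      rw [hre] at h1
      refine h1.trans ?_
      have habs : R ≤ ‖(↑x + ↑c * Complex.I : ℂ)‖ := by
        refine hc.trans ?_
        have h2 := Complex.abs_im_le_norm (↑x + ↑c * Complex.I)
        simpa using h2
      have h3 : ‖(↑x + ↑c * Complex.I : ℂ)‖ ^ (-a) ≤ R ^ (-a) :=
        Real.rpow_le_rpow_of_nonpos hR habs (neg_nonpos.mpr ha.le)
      calc C * Real.exp (t * x) * ‖(↑x + ↑c * Complex.I : ℂ)‖ ^ (-a)
          ≤ C * Real.exp (t * x) * R ^ (-a) := by
            exact mul_le_mul_of_nonneg_left h3 (by positivity)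
        _ = C * R ^ (-a) * Real.exp (t * x) := by ring
    · exact (continuous_const.mul
        (Real.continuous_exp.comp (continuous_const.mul continuous_id))).intervalIntegrable _ _
  refine key.trans ?_
  rw [intervalIntegral.integral_const_mul]
  have hJ : (∫ x in γ..b, Real.exp (t * x)) = t⁻¹ * (Real.exp (t * b) - Real.exp (t * γ)) := by
    rw [intervalIntegral.integral_comp_mul_left Real.exp ht.ne]
    rw [integral_exp]
    simp [smul_eq_mul]
  have hJ0 : 0 ≤ ∫ x in γ..b, Real.exp (t * x) :=
    intervalIntegral.integral_nonneg hb (fun x _ => (Real.exp_pos _).le)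
  have hJle : (∫ x in γ..b, Real.exp (t * x)) ≤ Real.exp (t * γ) * (-t)⁻¹ := by
    rw [hJ]
    have h5 : (0:ℝ) < (-t)⁻¹ := inv_pos.mpr (neg_pos.mpr ht)
    have h4 : t⁻¹ * (Real.exp (t * b) - Real.exp (t * γ))
        = (Real.exp (t * γ) - Real.exp (t * b)) * (-t)⁻¹ := by
      field_simp
      ring
    rw [h4]
    have h6 : Real.exp (t * γ) - Real.exp (t * b) ≤ Real.exp (t * γ) := by
      nlinarith [Real.exp_pos (t * b)]
    exact mul_le_mul_of_nonneg_right h6 h5.le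
  rw [_root_.abs_of_nonneg (mul_nonneg (mul_nonneg hC hRa) hJ0)]
  calc C * R ^ (-a) * ∫ x in γ..b, Real.exp (t * x)
      ≤ C * R ^ (-a) * (Real.exp (t * γ) * (-t)⁻¹) :=
        mul_le_mul_of_nonneg_left hJle (by positivity)

/-- Main auxiliary lemma: contour shifting kills the line integral for `t < 0`. -/
lemma aux (G : ℂ → X) (γ C t a : ℝ) (hγ : 0 < γ) (ht : t < 0) (hC : 0 ≤ C) (ha : 0 < a)
    (hdiff : ∀ z : ℂ, γ ≤ z.re → DifferentiableAt ℂ G z)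
    (hbd : ∀ z : ℂ, γ ≤ z.re → ‖G z‖ ≤ C * Real.exp (t * z.re) * ‖z‖ ^ (-a)) :
    Tendsto (fun R : ℝ => ∫ τ in (-R)..R, G ((γ : ℂ) + (τ : ℂ) * Complex.I))
      atTop (nhds 0) := by
  have main : ∀ R : ℝ, 0 < R → ‖∫ τ in (-R)..R, G ((γ : ℂ) + (τ : ℂ) * Complex.I)‖ ≤
      2 * (C * R ^ (-a) * (Real.exp (t * γ) * (-t)⁻¹)) := by
    intro R hR
    set A := 2 * (C * R ^ (-a) * (Real.exp (t * γ) * (-t)⁻¹)) with hA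
    have hIb : ∀ b : ℝ, γ ≤ b →
        ‖∫ τ in (-R)..R, G ((γ : ℂ) + (τ : ℂ) * Complex.I)‖ ≤
          A + C * γ ^ (-a) * (2 * R) * Real.exp (t * b) := by
      intro b hb
      have hrect := Complex.integral_boundary_rect_eq_zero_of_differentiableOn G
        ⟨γ, -R⟩ ⟨b, R⟩ ?_
      · set B := ∫ x in γ..b, G (↑x + ↑(-R : ℝ) * Complex.I) with hB
        set T := ∫ x in γ..b, G (↑x + ↑(R : ℝ) * Complex.I) with hT
        set Rt := ∫ y in (-R)..R, G (↑b + ↑y * Complex.I) with hRt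
        set L := ∫ y in (-R)..R, G (↑γ + ↑y * Complex.I) with hL
        have heq : Complex.I • L = B - T + Complex.I • Rt := by
          have h := hrect
          rw [sub_eq_zero] at h
          exact h.symm
        have hnorm : ‖L‖ = ‖Complex.I • L‖ := by
          rw [norm_smul]; simp
        rw [hnorm, heq]
        have hBle := horiz G γ C t a hγ ht hC ha hbd b hb R (-R) hR (by rw [_root_.abs_neg, _root_.abs_of_pos hR])
        have hTle := horiz G γ C t a hγ ht hC ha hbd b hb R R hR (by rw [_root_.abs_of_pos hR])
        have hRtle : ‖Rt‖ ≤ C * Real.exp (t * b) * γ ^ (-a) * |R - (-R)| := by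
          apply intervalIntegral.norm_integral_le_of_norm_le_const
          intro y hy
          have hre : ((↑b + ↑y * Complex.I : ℂ)).re = b := by simp
          have h1 := hbd (↑b + ↑y * Complex.I) (by rw [hre]; exact hb)
          rw [hre] at h1
          refine h1.trans ?_
          have habs : γ ≤ ‖(↑b + ↑y * Complex.I : ℂ)‖ := by
            refine le_trans (le_trans hb (le_abs_self b)) ?_
            have h2 := Complex.abs_re_le_norm (↑b + ↑y * Complex.I)
            rwa [hre] at h2
          have h3 : ‖(↑b + ↑y * Complex.I : ℂ)‖ ^ (-a) ≤ γ ^ (-a) :=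
            Real.rpow_le_rpow_of_nonpos hγ habs (neg_nonpos.mpr ha.le)
          exact mul_le_mul_of_nonneg_left h3 (by positivity)
        have habsR : |R - (-R)| = 2 * R := by rw [_root_.abs_of_nonneg (by linarith)]; ring
        rw [habsR] at hRtle
        calc ‖B - T + Complex.I • Rt‖ ≤ ‖B - T‖ + ‖Complex.I • Rt‖ := norm_add_le _ _
          _ ≤ (‖B‖ + ‖T‖) + ‖Rt‖ := by
              rw [norm_smul]; simp only [Complex.norm_I, one_mul]
              exact add_le_add (norm_sub_le _ _) le_rfl
          _ ≤ (C * R ^ (-a) * (Real.exp (t * γ) * (-t)⁻¹)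
                + C * R ^ (-a) * (Real.exp (t * γ) * (-t)⁻¹))
                + C * Real.exp (t * b) * γ ^ (-a) * (2 * R) := by
              exact add_le_add (add_le_add hBle hTle) hRtle
          _ = A + C * γ ^ (-a) * (2 * R) * Real.exp (t * b) := by rw [hA]; ring
      · -- differentiability on the rectangle
        intro z hz
        refine (hdiff z ?_).differentiableWithinAt
        have h1 := (Complex.mem_reProdIm.mp hz).1
        simp only [Complex.ofReal_re] at h1 ⊢
        rw [Set.uIcc_of_le hb] at h1
        exact h1.1
    -- take b → ∞
    have hexp : Tendsto (fun b : ℝ => Real.exp (t * b)) atTop (nhds 0) :=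
      Real.tendsto_exp_atBot.comp ((tendsto_const_mul_atBot_of_neg ht).mpr tendsto_id)
    have hlim : Tendsto (fun b : ℝ => A + C * γ ^ (-a) * (2 * R) * Real.exp (t * b))
        atTop (nhds A) := by
      have := (hexp.const_mul (C * γ ^ (-a) * (2 * R))).const_add A
      simpa using this
    refine ge_of_tendsto hlim ?_
    filter_upwards [eventually_ge_atTop γ] with b hb using hIb b hb
  have h0 : Tendsto (fun R : ℝ => 2 * (C * R ^ (-a) * (Real.exp (t * γ) * (-t)⁻¹)))
      atTop (nhds 0) := by
    have h1 := (tendsto_rpow_neg_atTop ha).const_mul (2 * C * (Real.exp (t * γ) * (-t)⁻¹))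
    rw [mul_zero] at h1
    exact h1.congr (fun R => by ring)
  refine squeeze_zero_norm' ?_ h0
  filter_upwards [eventually_gt_atTop 0] with R hR using main R hR

end InvLapAux
/-- the inverse Laplace transform of a resolvent-type family (and its
half-order time derivative) vanishes for negative times. -/
theorem inverse_laplace_vanishes_for_negative_time
    (X : Type*) [NormedAddCommGroup X] [NormedSpace ℂ X] [CompleteSpace X]
    (γ C₀ : ℝ) (hγ : 0 < γ) (hC₀ : 0 < C₀)
    (F : ℂ → X) (U : Set ℂ) (hU : IsOpen U) (hsub : {z : ℂ | γ ≤ z.re} ⊆ U)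
    (hhol : DifferentiableOn ℂ F U)
    (hbd : ∀ z : ℂ, γ ≤ z.re → ‖F z‖ ≤ C₀ * ‖z‖⁻¹)
    (t : ℝ) (ht : t < 0) :
    Filter.Tendsto
      (fun R : ℝ =>
        ∫ τ in (-R)..R,
          Complex.exp (((γ : ℂ) + (τ : ℂ) * Complex.I) * (t : ℂ)) •
            F ((γ : ℂ) + (τ : ℂ) * Complex.I))
      Filter.atTop (nhds (0 : X)) ∧
    Filter.Tendsto
      (fun R : ℝ =>
        ∫ τ in (-R)..R,
          ((((γ : ℂ) + (τ : ℂ) * Complex.I) ^ (1 / 2 : ℂ)) *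
              Complex.exp (((γ : ℂ) + (τ : ℂ) * Complex.I) * (t : ℂ))) •
            F ((γ : ℂ) + (τ : ℂ) * Complex.I))
      Filter.atTop (nhds (0 : X)) := by
  have hF : ∀ z : ℂ, γ ≤ z.re → DifferentiableAt ℂ F z := fun z hz =>
    hhol.differentiableAt (hU.mem_nhds (hsub hz))
  have habs_pos : ∀ z : ℂ, γ ≤ z.re → 0 < ‖z‖ := fun z hz =>
    lt_of_lt_of_le hγ (le_trans (le_trans hz (le_abs_self _)) (Complex.abs_re_le_norm z))
  have hexp_norm : ∀ z : ℂ, ‖Complex.exp (z * (t : ℂ))‖ = Real.exp (t * z.re) := by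
    intro z
    rw [Complex.norm_exp]
    congr 1
    simp [Complex.mul_re]
    ring
  constructor
  · refine InvLapAux.aux (fun z => Complex.exp (z * (t : ℂ)) • F z) γ C₀ t 1
      hγ ht hC₀.le one_pos ?_ ?_
    · intro z hz
      exact ((differentiableAt_id.mul_const ((t : ℂ))).cexp).smul (hF z hz)
    · intro z hz
      rw [norm_smul, hexp_norm z, Real.rpow_neg_one]
      calc Real.exp (t * z.re) * ‖F z‖
          ≤ Real.exp (t * z.re) * (C₀ * ‖z‖⁻¹) :=
            mul_le_mul_of_nonneg_left (hbd z hz) (Real.exp_pos _).le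
        _ = C₀ * Real.exp (t * z.re) * ‖z‖⁻¹ := by ring
  · refine InvLapAux.aux
      (fun z => (z ^ (1 / 2 : ℂ) * Complex.exp (z * (t : ℂ))) • F z) γ C₀ t (1/2)
      hγ ht hC₀.le (by norm_num) ?_ ?_
    · intro z hz
      refine DifferentiableAt.smul (DifferentiableAt.mul ?_ ?_) (hF z hz)
      · exact differentiableAt_id.cpow (differentiableAt_const _)
          (Complex.mem_slitPlane_iff.mpr (Or.inl (lt_of_lt_of_le hγ hz)))
      · exact ((differentiableAt_id.mul_const ((t : ℂ))).cexp)
    · intro z hz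
      have hpos := habs_pos z hz
      have hhalf : ‖z ^ (1 / 2 : ℂ)‖ = ‖z‖ ^ ((1:ℝ)/2) := by
        have : ((1 / 2 : ℝ) : ℂ) = (1 / 2 : ℂ) := by push_cast; ring
        rw [← this, Complex.norm_cpow_real]
      rw [norm_smul, norm_mul, hhalf,
        Complex.norm_exp]
      have hre : (z * (t : ℂ)).re = t * z.re := by
        simp [Complex.mul_re]; ring
      rw [hre]
      have hcomb : ‖z‖ ^ ((1:ℝ)/2) * ‖z‖⁻¹
          = ‖z‖ ^ (-(1/2 : ℝ)) := by
        rw [← Real.rpow_neg_one, ← Real.rpow_add hpos]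
        norm_num
      calc ‖z‖ ^ ((1:ℝ)/2) * Real.exp (t * z.re) * ‖F z‖
          ≤ ‖z‖ ^ ((1:ℝ)/2) * Real.exp (t * z.re) * (C₀ * ‖z‖⁻¹) := by
            refine mul_le_mul_of_nonneg_left (hbd z hz) (by positivity)
        _ = C₀ * Real.exp (t * z.re) * (‖z‖ ^ ((1:ℝ)/2) * ‖z‖⁻¹) := by
            ring
        _ = C₀ * Real.exp (t * z.re) * ‖z‖ ^ (-(1/2 : ℝ)) := by rw [hcomb]
end
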